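/- arXiv:1712.06896 — 10 statements merged into one kernel-verified Lean document; each statement's English description precedes it below -/
import Mathlib

section
/- Suppose the curvature scalars k₁ and k₂ of γ are constant functions. Let β(s,ψ) = γ(s) + ρ₀ cos(ψ) N(s) + ρ₀ sin(ψ) B(s) with ρ₀ > 0, let σ₁, σ₂ : ℝ → ℝ be smooth, and set x(t) = β(σ₁(t), σ₂(t)). If x is a geodesic of the tube, i.e. for every t the acceleration x''(t) is orthogonal to both ∂β/∂s and ∂β/∂ψ evaluated at (σ₁(t), σ₂(t)), then the function t ↦ ⟨x'(t), (∂β/∂s)(σ₁(t), σ₂(t))⟩ is constant. (This is the linear Noether integral arising from the ignorable coordinate s; together with the energy it makes the geodesic flow on the tube about a constant-curvature curve in ℝ³ integrable.) -/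
open Real
open scoped RealInnerProductSpace

lemma frame_inner {E : Type*} [NormedAddCommGroup E] [InnerProductSpace ℝ E]
    (T N B : E) (hTT : ⟪T, T⟫ = 1) (hNN : ⟪N, N⟫ = 1) (hBB : ⟪B, B⟫ = 1)
    (hTN : ⟪T, N⟫ = 0) (hTB : ⟪T, B⟫ = 0) (hNB : ⟪N, B⟫ = 0)
    (c₁ c₂ c₃ d₁ d₂ d₃ : ℝ) :
    ⟪c₁ • T + c₂ • N + c₃ • B, d₁ • T + d₂ • N + d₃ • B⟫ = c₁*d₁ + c₂*d₂ + c₃*d₃ := by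
  have hNT : ⟪N, T⟫ = 0 := by rw [real_inner_comm]; exact hTN
  have hBT : ⟪B, T⟫ = 0 := by rw [real_inner_comm]; exact hTB
  have hBN : ⟪B, N⟫ = 0 := by rw [real_inner_comm]; exact hNB
  simp only [inner_add_left, inner_add_right, real_inner_smul_left, real_inner_smul_right,
    hTT, hNN, hBB, hTN, hTB, hNB, hNT, hBT, hBN]
  ring

/-- Noether integral on the tube about a constant-curvature curve in ℝ³: if `γ` has constant
curvature scalars and `x = β ∘ (σ₁, σ₂)` is a geodesic of the tube `β` of radius `ρ₀` about
`γ` (its acceleration is orthogonal to `∂β/∂s` and `∂β/∂ψ`), then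
`t ↦ ⟨x'(t), (∂β/∂s)(σ₁(t), σ₂(t))⟩` is constant. -/
theorem tube_noether_integral_R3
    (γ N B : ℝ → EuclideanSpace ℝ (Fin 3)) (k₁ k₂ : ℝ → ℝ)
    (hγ : ContDiff ℝ (⊤ : ℕ∞) γ) (hN : ContDiff ℝ (⊤ : ℕ∞) N) (hB : ContDiff ℝ (⊤ : ℕ∞) B)
    (hk₁ : ContDiff ℝ (⊤ : ℕ∞) k₁) (hk₂ : ContDiff ℝ (⊤ : ℕ∞) k₂)
    (T : ℝ → EuclideanSpace ℝ (Fin 3)) (hT : T = deriv γ)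
    (hTT : ∀ s, ⟪T s, T s⟫ = 1) (hNN : ∀ s, ⟪N s, N s⟫ = 1) (hBB : ∀ s, ⟪B s, B s⟫ = 1)
    (hTN : ∀ s, ⟪T s, N s⟫ = 0) (hTB : ∀ s, ⟪T s, B s⟫ = 0) (hNB : ∀ s, ⟪N s, B s⟫ = 0)
    (hFS1 : ∀ s, deriv T s = k₁ s • N s)
    (hFS2 : ∀ s, deriv N s = -(k₁ s) • T s + k₂ s • B s)
    (hFS3 : ∀ s, deriv B s = -(k₂ s) • N s)
    (hk₁const : ∀ s₁ s₂, k₁ s₁ = k₁ s₂) (hk₂const : ∀ s₁ s₂, k₂ s₁ = k₂ s₂)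
    (ρ₀ : ℝ) (hρ₀ : 0 < ρ₀)
    (β : ℝ → ℝ → EuclideanSpace ℝ (Fin 3))
    (hβ : ∀ s ψ, β s ψ = γ s + (ρ₀ * Real.cos ψ) • N s + (ρ₀ * Real.sin ψ) • B s)
    (σ₁ σ₂ : ℝ → ℝ) (hσ₁ : ContDiff ℝ (⊤ : ℕ∞) σ₁) (hσ₂ : ContDiff ℝ (⊤ : ℕ∞) σ₂)
    (x : ℝ → EuclideanSpace ℝ (Fin 3)) (hx : ∀ t, x t = β (σ₁ t) (σ₂ t))
    (hgeo_s : ∀ t, ⟪deriv (deriv x) t, deriv (fun u => β u (σ₂ t)) (σ₁ t)⟫ = 0)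
    (hgeo_ψ : ∀ t, ⟪deriv (deriv x) t, deriv (fun v => β (σ₁ t) v) (σ₂ t)⟫ = 0) :
    ∃ c : ℝ, ∀ t, ⟪deriv x t, deriv (fun u => β u (σ₂ t)) (σ₁ t)⟫ = c := by
  set a := k₁ 0 with ha0
  set b := k₂ 0 with hb0
  have ha : ∀ s, k₁ s = a := fun s => hk₁const s 0
  have hb : ∀ s, k₂ s = b := fun s => hk₂const s 0
  -- basic derivative facts for the frame
  have hγ' : ∀ s, HasDerivAt γ (T s) s := by
    intro s; rw [hT]; exact ((hγ.differentiable (by simp)) s).hasDerivAt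
  have hT' : ∀ s, HasDerivAt T (a • N s) s := by
    intro s
    have h := (((contDiff_infty_iff_deriv.mp (hγ.of_le (by simp))).2.differentiable (by simp)) s).hasDerivAt
    rw [← hT] at h
    rwa [show deriv T s = a • N s by rw [hFS1 s, ha s]] at h
  have hN' : ∀ s, HasDerivAt N ((-a) • T s + b • B s) s := by
    intro s
    have h := ((hN.differentiable (by simp)) s).hasDerivAt
    rwa [show deriv N s = (-a) • T s + b • B s by rw [hFS2 s, ha s, hb s]] at h
  have hB' : ∀ s, HasDerivAt B ((-b) • N s) s := by
    intro s
    have h := ((hB.differentiable (by simp)) s).hasDerivAt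
    rwa [show deriv B s = (-b) • N s by rw [hFS3 s, hb s]] at h
  have hσ₁' : ∀ t, HasDerivAt σ₁ (deriv σ₁ t) t := fun t => ((hσ₁.differentiable (by simp)) t).hasDerivAt
  have hσ₂' : ∀ t, HasDerivAt σ₂ (deriv σ₂ t) t := fun t => ((hσ₂.differentiable (by simp)) t).hasDerivAt
  -- ∂β/∂s in the frame
  have hβs : ∀ ψ s, HasDerivAt (fun u => β u ψ)
      ((1 - ρ₀*a*Real.cos ψ) • T s + (-(ρ₀*b*Real.sin ψ)) • N s + (ρ₀*b*Real.cos ψ) • B s) s := by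
    intro ψ s
    have he : (fun u => β u ψ)
        = fun u => γ u + (ρ₀ * Real.cos ψ) • N u + (ρ₀ * Real.sin ψ) • B u := by
      funext u; exact hβ u ψ
    rw [he]
    have h1 := ((hγ' s).add (((hN' s).const_smul (ρ₀ * Real.cos ψ)))).add
      ((hB' s).const_smul (ρ₀ * Real.sin ψ))
    exact h1.congr_deriv (by module)
  -- frame composed with σ₁
  have hTc : ∀ t, HasDerivAt (fun t => T (σ₁ t)) (deriv σ₁ t • (a • N (σ₁ t))) t := by
    intro t
    have := HasDerivAt.scomp t (hT' (σ₁ t)) (hσ₁' t)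
    simpa [Function.comp_def] using this
  have hNc : ∀ t, HasDerivAt (fun t => N (σ₁ t))
      (deriv σ₁ t • ((-a) • T (σ₁ t) + b • B (σ₁ t))) t := by
    intro t
    have := HasDerivAt.scomp t (hN' (σ₁ t)) (hσ₁' t)
    simpa [Function.comp_def] using this
  have hBc : ∀ t, HasDerivAt (fun t => B (σ₁ t)) (deriv σ₁ t • ((-b) • N (σ₁ t))) t := by
    intro t
    have := HasDerivAt.scomp t (hB' (σ₁ t)) (hσ₁' t)
    simpa [Function.comp_def] using this
  have hγc : ∀ t, HasDerivAt (fun t => γ (σ₁ t)) (deriv σ₁ t • T (σ₁ t)) t := by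
    intro t
    have := HasDerivAt.scomp t (hγ' (σ₁ t)) (hσ₁' t)
    simpa [Function.comp_def] using this
  -- scalar coefficient derivatives
  have hcos : ∀ t, HasDerivAt (fun t => Real.cos (σ₂ t)) (-Real.sin (σ₂ t) * deriv σ₂ t) t :=
    fun t => (hσ₂' t).cos
  have hsin : ∀ t, HasDerivAt (fun t => Real.sin (σ₂ t)) (Real.cos (σ₂ t) * deriv σ₂ t) t :=
    fun t => (hσ₂' t).sin
  -- derivative of x
  have hxe : x = fun t => γ (σ₁ t) + (ρ₀ * Real.cos (σ₂ t)) • N (σ₁ t)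
      + (ρ₀ * Real.sin (σ₂ t)) • B (σ₁ t) := by
    funext t; rw [hx t, hβ]
  have hx' : ∀ t, HasDerivAt x
      ( (deriv σ₁ t * (1 - ρ₀*a*Real.cos (σ₂ t))) • T (σ₁ t)
      + (deriv σ₁ t * (-(ρ₀*b*Real.sin (σ₂ t))) + deriv σ₂ t * (-(ρ₀*Real.sin (σ₂ t)))) • N (σ₁ t)
      + (deriv σ₁ t * (ρ₀*b*Real.cos (σ₂ t)) + deriv σ₂ t * (ρ₀*Real.cos (σ₂ t))) • B (σ₁ t)) t := by
    intro t
    rw [hxe]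
    have h1 := ((hγc t).add ((((hcos t).const_mul ρ₀)).smul (hNc t))).add
      (((hsin t).const_mul ρ₀).smul (hBc t))
    exact h1.congr_deriv (by match_scalars <;> ring)
  -- derivative of t ↦ (∂β/∂s)(σ₁ t, σ₂ t)
  have hDs' : ∀ t, HasDerivAt
      (fun t => (1 - ρ₀*a*Real.cos (σ₂ t)) • T (σ₁ t)
        + (-(ρ₀*b*Real.sin (σ₂ t))) • N (σ₁ t) + (ρ₀*b*Real.cos (σ₂ t)) • B (σ₁ t))
      ( (deriv σ₁ t * (ρ₀*a*b*Real.sin (σ₂ t)) + deriv σ₂ t * (ρ₀*a*Real.sin (σ₂ t))) • T (σ₁ t)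
      + (deriv σ₁ t * (a - ρ₀*(a^2+b^2)*Real.cos (σ₂ t)) + deriv σ₂ t * (-(ρ₀*b*Real.cos (σ₂ t)))) • N (σ₁ t)
      + (deriv σ₁ t * (-(ρ₀*b^2*Real.sin (σ₂ t))) + deriv σ₂ t * (-(ρ₀*b*Real.sin (σ₂ t)))) • B (σ₁ t)) t := by
    intro t
    have hc1 : HasDerivAt (fun t => 1 - ρ₀*a*Real.cos (σ₂ t))
        (ρ₀*a*(Real.sin (σ₂ t) * deriv σ₂ t)) t := by
      have := ((hcos t).const_mul (ρ₀*a)).const_sub 1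
      exact this.congr_deriv (by ring)
    have h1 := ((hc1.smul (hTc t)).add
        ((((hsin t).const_mul (ρ₀*b)).neg).smul (hNc t))).add
      (((hcos t).const_mul (ρ₀*b)).smul (hBc t))
    exact h1.congr_deriv (by simp only [Pi.neg_apply]; match_scalars <;> ring)
  -- smoothness of x, so deriv x is differentiable
  have hxC : ContDiff ℝ (⊤ : ℕ∞) x := by
    rw [hxe]
    exact ((hγ.comp hσ₁).add ((contDiff_const.mul (Real.contDiff_cos.comp hσ₂)).smul
      (hN.comp hσ₁))).add ((contDiff_const.mul (Real.contDiff_sin.comp hσ₂)).smul (hB.comp hσ₁))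
  have hdx : Differentiable ℝ (deriv x) := (contDiff_infty_iff_deriv.mp (hxC.of_le (by simp))).2.differentiable (by simp)
  -- the Noether function
  set f : ℝ → ℝ := fun t => ⟪deriv x t,
      (1 - ρ₀*a*Real.cos (σ₂ t)) • T (σ₁ t) + (-(ρ₀*b*Real.sin (σ₂ t))) • N (σ₁ t)
      + (ρ₀*b*Real.cos (σ₂ t)) • B (σ₁ t)⟫ with hf
  have hfd : ∀ t, HasDerivAt f
      ( ⟪deriv x t,
          (deriv σ₁ t * (ρ₀*a*b*Real.sin (σ₂ t)) + deriv σ₂ t * (ρ₀*a*Real.sin (σ₂ t))) • T (σ₁ t)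
        + (deriv σ₁ t * (a - ρ₀*(a^2+b^2)*Real.cos (σ₂ t)) + deriv σ₂ t * (-(ρ₀*b*Real.cos (σ₂ t)))) • N (σ₁ t)
        + (deriv σ₁ t * (-(ρ₀*b^2*Real.sin (σ₂ t))) + deriv σ₂ t * (-(ρ₀*b*Real.sin (σ₂ t)))) • B (σ₁ t)⟫
      + ⟪deriv (deriv x) t,
          (1 - ρ₀*a*Real.cos (σ₂ t)) • T (σ₁ t) + (-(ρ₀*b*Real.sin (σ₂ t))) • N (σ₁ t)
        + (ρ₀*b*Real.cos (σ₂ t)) • B (σ₁ t)⟫) t := by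
    intro t
    exact HasDerivAt.inner ℝ ((hdx t).hasDerivAt) (hDs' t)
  have hfzero : ∀ t, deriv f t = 0 := by
    intro t
    rw [(hfd t).deriv]
    have h2 : ⟪deriv (deriv x) t,
        (1 - ρ₀*a*Real.cos (σ₂ t)) • T (σ₁ t) + (-(ρ₀*b*Real.sin (σ₂ t))) • N (σ₁ t)
        + (ρ₀*b*Real.cos (σ₂ t)) • B (σ₁ t)⟫ = 0 := by
      rw [← (hβs (σ₂ t) (σ₁ t)).deriv]
      exact hgeo_s t
    have h1 : ⟪deriv x t,
        (deriv σ₁ t * (ρ₀*a*b*Real.sin (σ₂ t)) + deriv σ₂ t * (ρ₀*a*Real.sin (σ₂ t))) • T (σ₁ t)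
      + (deriv σ₁ t * (a - ρ₀*(a^2+b^2)*Real.cos (σ₂ t)) + deriv σ₂ t * (-(ρ₀*b*Real.cos (σ₂ t)))) • N (σ₁ t)
      + (deriv σ₁ t * (-(ρ₀*b^2*Real.sin (σ₂ t))) + deriv σ₂ t * (-(ρ₀*b*Real.sin (σ₂ t)))) • B (σ₁ t)⟫ = 0 := by
      rw [(hx' t).deriv]
      rw [frame_inner _ _ _ (hTT (σ₁ t)) (hNN (σ₁ t)) (hBB (σ₁ t)) (hTN (σ₁ t)) (hTB (σ₁ t))
        (hNB (σ₁ t))]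
      ring
    rw [h1, h2, add_zero]
  have hfdiff : Differentiable ℝ f := fun t => (hfd t).differentiableAt
  refine ⟨f 0, fun t => ?_⟩
  rw [(hβs (σ₂ t) (σ₁ t)).deriv]
  exact is_const_of_deriv_eq_zero hfdiff hfzero t 0
end

section
/- Suppose the curvature scalars k₁ and k₂ of γ are constant functions. Let β(s,ψ) = γ(s) + f(ψ) N(s) + g(ψ) B(s) be the generalized tube about γ determined by the smooth functions f, g : ℝ → ℝ, let σ₁, σ₂ : ℝ → ℝ be smooth, and set x(t) = β(σ₁(t), σ₂(t)). If x is a geodesic of the generalized tube, i.e. for every t the acceleration x''(t) is orthogonal to both ∂β/∂s and ∂β/∂ψ evaluated at (σ₁(t), σ₂(t)), then the function t ↦ ⟨x'(t), (∂β/∂s)(σ₁(t), σ₂(t))⟩ is constant. -/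
open Real
open scoped RealInnerProductSpace

/-- Noether integral on the generalized tube `β(s,ψ) = γ(s) + f(ψ) N(s) + g(ψ) B(s)` about a
constant-curvature curve `γ` in ℝ³: if `x = β ∘ (σ₁, σ₂)` is a geodesic of the generalized
tube, then `t ↦ ⟨x'(t), (∂β/∂s)(σ₁(t), σ₂(t))⟩` is constant. -/
theorem generalized_tube_noether_integral_R3
    (γ N B : ℝ → EuclideanSpace ℝ (Fin 3)) (k₁ k₂ : ℝ → ℝ)
    (hγ : ContDiff ℝ (⊤ : ℕ∞) γ) (hN : ContDiff ℝ (⊤ : ℕ∞) N) (hB : ContDiff ℝ (⊤ : ℕ∞) B)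
    (hk₁ : ContDiff ℝ (⊤ : ℕ∞) k₁) (hk₂ : ContDiff ℝ (⊤ : ℕ∞) k₂)
    (T : ℝ → EuclideanSpace ℝ (Fin 3)) (hT : T = deriv γ)
    (hTT : ∀ s, ⟪T s, T s⟫ = 1) (hNN : ∀ s, ⟪N s, N s⟫ = 1) (hBB : ∀ s, ⟪B s, B s⟫ = 1)
    (hTN : ∀ s, ⟪T s, N s⟫ = 0) (hTB : ∀ s, ⟪T s, B s⟫ = 0) (hNB : ∀ s, ⟪N s, B s⟫ = 0)
    (hFS1 : ∀ s, deriv T s = k₁ s • N s)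
    (hFS2 : ∀ s, deriv N s = -(k₁ s) • T s + k₂ s • B s)
    (hFS3 : ∀ s, deriv B s = -(k₂ s) • N s)
    (hk₁const : ∀ s₁ s₂, k₁ s₁ = k₁ s₂) (hk₂const : ∀ s₁ s₂, k₂ s₁ = k₂ s₂)
    (f g : ℝ → ℝ) (hf : ContDiff ℝ (⊤ : ℕ∞) f) (hg : ContDiff ℝ (⊤ : ℕ∞) g)
    (β : ℝ → ℝ → EuclideanSpace ℝ (Fin 3))
    (hβ : ∀ s ψ, β s ψ = γ s + f ψ • N s + g ψ • B s)
    (σ₁ σ₂ : ℝ → ℝ) (hσ₁ : ContDiff ℝ (⊤ : ℕ∞) σ₁) (hσ₂ : ContDiff ℝ (⊤ : ℕ∞) σ₂)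
    (x : ℝ → EuclideanSpace ℝ (Fin 3)) (hx : ∀ t, x t = β (σ₁ t) (σ₂ t))
    (hgeo_s : ∀ t, ⟪deriv (deriv x) t, deriv (fun u => β u (σ₂ t)) (σ₁ t)⟫ = 0)
    (hgeo_ψ : ∀ t, ⟪deriv (deriv x) t, deriv (fun v => β (σ₁ t) v) (σ₂ t)⟫ = 0) :
    ∃ c : ℝ, ∀ t, ⟪deriv x t, deriv (fun u => β u (σ₂ t)) (σ₁ t)⟫ = c := by
  classical
  set c₁ := k₁ 0 with hc₁def
  set c₂ := k₂ 0 with hc₂def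
  -- symmetric inner products
  have hNT : ∀ s, ⟪N s, T s⟫ = 0 := fun s => by rw [real_inner_comm]; exact hTN s
  have hBT : ∀ s, ⟪B s, T s⟫ = 0 := fun s => by rw [real_inner_comm]; exact hTB s
  have hBN : ∀ s, ⟪B s, N s⟫ = 0 := fun s => by rw [real_inner_comm]; exact hNB s
  have hinner : ∀ (s a b c p q r : ℝ),
      ⟪a • T s + b • N s + c • B s, p • T s + q • N s + r • B s⟫ = a*p + b*q + c*r := by
    intro s a b c p q r
    simp only [inner_add_left, inner_add_right, real_inner_smul_left, real_inner_smul_right,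
      hTT, hNN, hBB, hTN, hTB, hNB, hNT, hBT, hBN]
    ring
  -- basic derivative facts
  have hTsm : ContDiff ℝ (⊤:ℕ∞) T := by
    rw [hT]; exact (contDiff_infty_iff_deriv.mp (hγ.of_le (by simp))).2
  have hdγ : ∀ s, HasDerivAt γ (T s) s := fun s => by
    rw [hT]; exact ((hγ.differentiable (by simp)) s).hasDerivAt
  have hdT : ∀ s, HasDerivAt T (c₁ • N s) s := fun s => by
    have h := ((hTsm.differentiable (by simp)) s).hasDerivAt
    rwa [hFS1 s, hk₁const s 0] at h
  have hdN : ∀ s, HasDerivAt N ((-c₁) • T s + c₂ • B s) s := fun s => by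
    have h := ((hN.differentiable (by simp)) s).hasDerivAt
    rwa [hFS2 s, hk₁const s 0, hk₂const s 0] at h
  have hdB : ∀ s, HasDerivAt B ((-c₂) • N s) s := fun s => by
    have h := ((hB.differentiable (by simp)) s).hasDerivAt
    rwa [hFS3 s, hk₂const s 0] at h
  have hdσ₁ : ∀ t, HasDerivAt σ₁ (deriv σ₁ t) t :=
    fun t => ((hσ₁.differentiable (by simp)) t).hasDerivAt
  have hdσ₂ : ∀ t, HasDerivAt σ₂ (deriv σ₂ t) t :=
    fun t => ((hσ₂.differentiable (by simp)) t).hasDerivAt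
  have hdf : ∀ ψ, HasDerivAt f (deriv f ψ) ψ :=
    fun ψ => ((hf.differentiable (by simp)) ψ).hasDerivAt
  have hdg : ∀ ψ, HasDerivAt g (deriv g ψ) ψ :=
    fun ψ => ((hg.differentiable (by simp)) ψ).hasDerivAt
  -- the s-partial of β
  have hβs : ∀ (ψ s : ℝ), HasDerivAt (fun u => β u ψ)
      ((1 - f ψ * c₁) • T s + (-(g ψ * c₂)) • N s + (f ψ * c₂) • B s) s := by
    intro ψ s
    have h : HasDerivAt (fun u => γ u + f ψ • N u + g ψ • B u)
        (T s + f ψ • ((-c₁) • T s + c₂ • B s) + g ψ • ((-c₂) • N s)) s :=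
      ((hdγ s).add ((hdN s).const_smul (f ψ))).add ((hdB s).const_smul (g ψ))
    have heq : (fun u => β u ψ) = fun u => γ u + f ψ • N u + g ψ • B u := by
      funext u; rw [hβ]
    rw [heq]
    convert h using 1
    module
  -- frame along the curve x
  have hTσ : ∀ t, HasDerivAt (fun t => T (σ₁ t)) (deriv σ₁ t • (c₁ • N (σ₁ t))) t :=
    fun t => (hdT (σ₁ t)).scomp t (hdσ₁ t)
  have hNσ : ∀ t, HasDerivAt (fun t => N (σ₁ t))
      (deriv σ₁ t • ((-c₁) • T (σ₁ t) + c₂ • B (σ₁ t))) t :=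
    fun t => (hdN (σ₁ t)).scomp t (hdσ₁ t)
  have hBσ : ∀ t, HasDerivAt (fun t => B (σ₁ t)) (deriv σ₁ t • ((-c₂) • N (σ₁ t))) t :=
    fun t => (hdB (σ₁ t)).scomp t (hdσ₁ t)
  have hγσ : ∀ t, HasDerivAt (fun t => γ (σ₁ t)) (deriv σ₁ t • T (σ₁ t)) t :=
    fun t => (hdγ (σ₁ t)).scomp t (hdσ₁ t)
  have hfσ : ∀ t, HasDerivAt (fun t => f (σ₂ t)) (deriv f (σ₂ t) * deriv σ₂ t) t := by
    intro t
    have := (hdf (σ₂ t)).comp t (hdσ₂ t)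
    exact this
  have hgσ : ∀ t, HasDerivAt (fun t => g (σ₂ t)) (deriv g (σ₂ t) * deriv σ₂ t) t := by
    intro t
    have := (hdg (σ₂ t)).comp t (hdσ₂ t)
    exact this
  -- scalar components of x'
  set A : ℝ → ℝ := fun t => deriv σ₁ t * (1 - f (σ₂ t) * c₁) with hAdef
  set Bb : ℝ → ℝ := fun t => deriv f (σ₂ t) * deriv σ₂ t - g (σ₂ t) * c₂ * deriv σ₁ t with hBbdef
  set Cc : ℝ → ℝ := fun t => deriv g (σ₂ t) * deriv σ₂ t + f (σ₂ t) * c₂ * deriv σ₁ t with hCcdef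
  -- first derivative of x
  have hdx : ∀ t, HasDerivAt x
      (A t • T (σ₁ t) + Bb t • N (σ₁ t) + Cc t • B (σ₁ t)) t := by
    intro t
    have hxeq : x = fun t => γ (σ₁ t) + f (σ₂ t) • N (σ₁ t) + g (σ₂ t) • B (σ₁ t) := by
      funext t; rw [hx, hβ]
    rw [hxeq]
    have h := ((hγσ t).add ((hfσ t).smul (hNσ t))).add ((hgσ t).smul (hBσ t))
    refine h.congr_deriv ?_
    simp only [hAdef, hBbdef, hCcdef]
    module
  have hderivx : deriv x = fun t => A t • T (σ₁ t) + Bb t • N (σ₁ t) + Cc t • B (σ₁ t) :=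
    funext fun t => (hdx t).deriv
  -- smoothness of the scalar components
  have hσ₁' : ContDiff ℝ (⊤:ℕ∞) (deriv σ₁) := (contDiff_infty_iff_deriv.mp (hσ₁.of_le (by simp))).2
  have hσ₂' : ContDiff ℝ (⊤:ℕ∞) (deriv σ₂) := (contDiff_infty_iff_deriv.mp (hσ₂.of_le (by simp))).2
  have hf' : ContDiff ℝ (⊤:ℕ∞) (deriv f) := (contDiff_infty_iff_deriv.mp (hf.of_le (by simp))).2
  have hg' : ContDiff ℝ (⊤:ℕ∞) (deriv g) := (contDiff_infty_iff_deriv.mp (hg.of_le (by simp))).2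
  have hfi : ContDiff ℝ (⊤:ℕ∞) f := hf.of_le (by simp)
  have hgi : ContDiff ℝ (⊤:ℕ∞) g := hg.of_le (by simp)
  have hσ₂i : ContDiff ℝ (⊤:ℕ∞) σ₂ := hσ₂.of_le (by simp)
  have hAsm : ContDiff ℝ (⊤:ℕ∞) A := by
    rw [hAdef]
    exact hσ₁'.mul (contDiff_const.sub ((hfi.comp hσ₂i).mul contDiff_const))
  have hBsm : ContDiff ℝ (⊤:ℕ∞) Bb := by
    rw [hBbdef]
    exact ((hf'.comp hσ₂i).mul hσ₂').sub (((hgi.comp hσ₂i).mul contDiff_const).mul hσ₁')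
  have hCsm : ContDiff ℝ (⊤:ℕ∞) Cc := by
    rw [hCcdef]
    exact ((hg'.comp hσ₂i).mul hσ₂').add (((hfi.comp hσ₂i).mul contDiff_const).mul hσ₁')
  have hdA : ∀ t, HasDerivAt A (deriv A t) t := fun t => ((hAsm.differentiable (by simp)) t).hasDerivAt
  have hdBb : ∀ t, HasDerivAt Bb (deriv Bb t) t := fun t => ((hBsm.differentiable (by simp)) t).hasDerivAt
  have hdCc : ∀ t, HasDerivAt Cc (deriv Cc t) t := fun t => ((hCsm.differentiable (by simp)) t).hasDerivAt
  -- second derivative of x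
  have hdx2 : ∀ t, HasDerivAt (deriv x)
      ((deriv A t + Bb t * deriv σ₁ t * (-c₁)) • T (σ₁ t)
        + (deriv Bb t + A t * deriv σ₁ t * c₁ + Cc t * deriv σ₁ t * (-c₂)) • N (σ₁ t)
        + (deriv Cc t + Bb t * deriv σ₁ t * c₂) • B (σ₁ t)) t := by
    intro t
    rw [hderivx]
    have h := (((hdA t).smul (hTσ t)).add ((hdBb t).smul (hNσ t))).add ((hdCc t).smul (hBσ t))
    refine h.congr_deriv ?_
    module
  -- the vector field P(t) = ∂β/∂s (σ₁ t, σ₂ t), and its value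
  have hP : ∀ t, deriv (fun u => β u (σ₂ t)) (σ₁ t)
      = (1 - f (σ₂ t) * c₁) • T (σ₁ t) + (-(g (σ₂ t) * c₂)) • N (σ₁ t)
        + (f (σ₂ t) * c₂) • B (σ₁ t) :=
    fun t => (hβs (σ₂ t) (σ₁ t)).deriv
  have hdP : ∀ t, HasDerivAt
      (fun t => (1 - f (σ₂ t) * c₁) • T (σ₁ t) + (-(g (σ₂ t) * c₂)) • N (σ₁ t)
        + (f (σ₂ t) * c₂) • B (σ₁ t))
      ((-(deriv f (σ₂ t) * deriv σ₂ t * c₁) + (-(g (σ₂ t) * c₂)) * deriv σ₁ t * (-c₁)) • T (σ₁ t)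
        + (-(deriv g (σ₂ t) * deriv σ₂ t * c₂) + (1 - f (σ₂ t) * c₁) * deriv σ₁ t * c₁
            + (f (σ₂ t) * c₂) * deriv σ₁ t * (-c₂)) • N (σ₁ t)
        + (deriv f (σ₂ t) * deriv σ₂ t * c₂ + (-(g (σ₂ t) * c₂)) * deriv σ₁ t * c₂) • B (σ₁ t)) t := by
    intro t
    have hc1 : HasDerivAt (fun t => 1 - f (σ₂ t) * c₁) (-(deriv f (σ₂ t) * deriv σ₂ t * c₁)) t := by
      have := (hasDerivAt_const t (1:ℝ)).sub ((hfσ t).mul_const c₁)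
      refine this.congr_deriv ?_
      all_goals ring
    have hc2 : HasDerivAt (fun t => -(g (σ₂ t) * c₂)) (-(deriv g (σ₂ t) * deriv σ₂ t * c₂)) t := by
      have := ((hgσ t).mul_const c₂).neg
      refine this.congr_deriv ?_
      all_goals ring
    have hc3 : HasDerivAt (fun t => f (σ₂ t) * c₂) (deriv f (σ₂ t) * deriv σ₂ t * c₂) t :=
      (hfσ t).mul_const c₂
    have h := ((hc1.smul (hTσ t)).add (hc2.smul (hNσ t))).add (hc3.smul (hBσ t))
    refine h.congr_deriv ?_
    module
  -- the conserved quantity has zero derivative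
  have hI : ∀ t, HasDerivAt (fun t => ⟪deriv x t,
      (1 - f (σ₂ t) * c₁) • T (σ₁ t) + (-(g (σ₂ t) * c₂)) • N (σ₁ t)
        + (f (σ₂ t) * c₂) • B (σ₁ t)⟫) 0 t := by
    intro t
    have h := HasDerivAt.inner ℝ (hdx2 t) (hdP t)
    have hgeo : (⟪(deriv A t + Bb t * deriv σ₁ t * (-c₁)) • T (σ₁ t)
        + (deriv Bb t + A t * deriv σ₁ t * c₁ + Cc t * deriv σ₁ t * (-c₂)) • N (σ₁ t)
        + (deriv Cc t + Bb t * deriv σ₁ t * c₂) • B (σ₁ t),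
        (1 - f (σ₂ t) * c₁) • T (σ₁ t) + (-(g (σ₂ t) * c₂)) • N (σ₁ t)
        + (f (σ₂ t) * c₂) • B (σ₁ t)⟫ : ℝ) = 0 := by
      have h2 := hgeo_s t
      rwa [hP t, (hdx2 t).deriv] at h2
    refine h.congr_deriv ?_
    simp only [hderivx]
    simp only [hinner] at hgeo ⊢
    simp only [hAdef, hBbdef, hCcdef] at hgeo ⊢
    linear_combination hgeo
  refine ⟨⟪deriv x 0, deriv (fun u => β u (σ₂ 0)) (σ₁ 0)⟫, fun t => ?_⟩
  have hconst := is_const_of_deriv_eq_zero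
    (f := fun t => ⟪deriv x t,
      (1 - f (σ₂ t) * c₁) • T (σ₁ t) + (-(g (σ₂ t) * c₂)) • N (σ₁ t)
        + (f (σ₂ t) * c₂) • B (σ₁ t)⟫)
    (fun t => (hI t).differentiableAt) (fun t => (hI t).deriv) t 0
  rw [hP t, hP 0]
  exact hconst
end

section
/- Suppose the curvature scalars k₁ and k₂ of γ are constant functions. Let ρ₀ > 0, let β(s,ψ) = cos(ρ₀) γ(s) + sin(ρ₀)(cos(ψ) N(s) + sin(ψ) B(s)) be the geodesic tube of radius ρ₀ about γ in S³, let σ₁, σ₂ : ℝ → ℝ be smooth, and set x(t) = β(σ₁(t), σ₂(t)). If x is a geodesic of the tube, i.e. for every t the acceleration x''(t) is orthogonal (in ℝ⁴) to both ∂β/∂s and ∂β/∂ψ evaluated at (σ₁(t), σ₂(t)), then the function t ↦ ⟨x'(t), (∂β/∂s)(σ₁(t), σ₂(t))⟩ is constant. (This is the linear Noether integral establishing integrability of the geodesic flow on tubes about constant-curvature curves in the space form S³.) -/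
open Real
open scoped RealInnerProductSpace
open scoped ContDiff

/-- Noether integral on the geodesic tube of radius `ρ₀` about a constant-curvature curve `γ`
on the unit 3-sphere `S³ ⊂ ℝ⁴`: if `x = β ∘ (σ₁, σ₂)` is a geodesic of the tube (its
acceleration is orthogonal in ℝ⁴ to `∂β/∂s` and `∂β/∂ψ`), then
`t ↦ ⟨x'(t), (∂β/∂s)(σ₁(t), σ₂(t))⟩` is constant. -/
theorem tube_noether_integral_S3
    (γ N B : ℝ → EuclideanSpace ℝ (Fin 4)) (k₁ k₂ : ℝ → ℝ)
    (hγ : ContDiff ℝ (⊤ : ℕ∞) γ) (hN : ContDiff ℝ (⊤ : ℕ∞) N) (hB : ContDiff ℝ (⊤ : ℕ∞) B)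
    (hk₁ : ContDiff ℝ (⊤ : ℕ∞) k₁) (hk₂ : ContDiff ℝ (⊤ : ℕ∞) k₂)
    (hsphere : ∀ s, ‖γ s‖ = 1)
    (T : ℝ → EuclideanSpace ℝ (Fin 4)) (hT : T = deriv γ)
    (hTT : ∀ s, ⟪T s, T s⟫ = 1) (hNN : ∀ s, ⟪N s, N s⟫ = 1) (hBB : ∀ s, ⟪B s, B s⟫ = 1)
    (hγT : ∀ s, ⟪γ s, T s⟫ = 0) (hγN : ∀ s, ⟪γ s, N s⟫ = 0) (hγB : ∀ s, ⟪γ s, B s⟫ = 0)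
    (hTN : ∀ s, ⟪T s, N s⟫ = 0) (hTB : ∀ s, ⟪T s, B s⟫ = 0) (hNB : ∀ s, ⟪N s, B s⟫ = 0)
    (hFS1 : ∀ s, deriv T s = -γ s + k₁ s • N s)
    (hFS2 : ∀ s, deriv N s = -(k₁ s) • T s + k₂ s • B s)
    (hFS3 : ∀ s, deriv B s = -(k₂ s) • N s)
    (hk₁const : ∀ s₁ s₂, k₁ s₁ = k₁ s₂) (hk₂const : ∀ s₁ s₂, k₂ s₁ = k₂ s₂)
    (ρ₀ : ℝ) (hρ₀ : 0 < ρ₀)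
    (β : ℝ → ℝ → EuclideanSpace ℝ (Fin 4))
    (hβ : ∀ s ψ, β s ψ = Real.cos ρ₀ • γ s
        + (Real.sin ρ₀ * Real.cos ψ) • N s + (Real.sin ρ₀ * Real.sin ψ) • B s)
    (σ₁ σ₂ : ℝ → ℝ) (hσ₁ : ContDiff ℝ (⊤ : ℕ∞) σ₁) (hσ₂ : ContDiff ℝ (⊤ : ℕ∞) σ₂)
    (x : ℝ → EuclideanSpace ℝ (Fin 4)) (hx : ∀ t, x t = β (σ₁ t) (σ₂ t))
    (hgeo_s : ∀ t, ⟪deriv (deriv x) t, deriv (fun u => β u (σ₂ t)) (σ₁ t)⟫ = 0)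
    (hgeo_ψ : ∀ t, ⟪deriv (deriv x) t, deriv (fun v => β (σ₁ t) v) (σ₂ t)⟫ = 0) :
    ∃ c : ℝ, ∀ t, ⟪deriv x t, deriv (fun u => β u (σ₂ t)) (σ₁ t)⟫ = c := by
  classical
  set a := k₁ 0 with ha0
  set b := k₂ 0 with hb0
  have ha : ∀ s, k₁ s = a := fun s => hk₁const s 0
  have hb : ∀ s, k₂ s = b := fun s => hk₂const s 0
  set p := Real.cos ρ₀ with hp
  set q := Real.sin ρ₀ with hq
  -- basic differentiability
  have hγd : Differentiable ℝ γ := hγ.differentiable (by simp)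
  have h1inf : (1 : WithTop ℕ∞) ≤ ∞ := by exact_mod_cast (le_top : (1 : ℕ∞) ≤ ⊤)
  have hTc : ContDiff ℝ ∞ T := by
    rw [hT]; exact (contDiff_infty_iff_deriv.mp (hγ.of_le (by simp))).2
  have hTd : Differentiable ℝ T := hTc.differentiable (by simp)
  have hNd : Differentiable ℝ N := hN.differentiable (by simp)
  have hBd : Differentiable ℝ B := hB.differentiable (by simp)
  have dγ : ∀ s, HasDerivAt γ (T s) s := fun s => by
    rw [hT]; exact (hγd s).hasDerivAt
  have dT : ∀ s, HasDerivAt T (-γ s + a • N s) s := fun s => by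
    have h := (hTd s).hasDerivAt; rwa [hFS1 s, ha s] at h
  have dN : ∀ s, HasDerivAt N (-a • T s + b • B s) s := fun s => by
    have h := (hNd s).hasDerivAt; rwa [hFS2 s, ha s, hb s] at h
  have dB : ∀ s, HasDerivAt B (-b • N s) s := fun s => by
    have h := (hBd s).hasDerivAt; rwa [hFS3 s, hb s] at h
  have hσ₁d : Differentiable ℝ σ₁ := hσ₁.differentiable (by simp)
  have hσ₂d : Differentiable ℝ σ₂ := hσ₂.differentiable (by simp)
  have dσ₁ : ∀ t, HasDerivAt σ₁ (deriv σ₁ t) t := fun t => (hσ₁d t).hasDerivAt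
  have dσ₂ : ∀ t, HasDerivAt σ₂ (deriv σ₂ t) t := fun t => (hσ₂d t).hasDerivAt
  -- symmetric orthonormality relations
  have hTγ : ∀ s, ⟪T s, γ s⟫ = 0 := fun s => by rw [real_inner_comm]; exact hγT s
  have hNγ : ∀ s, ⟪N s, γ s⟫ = 0 := fun s => by rw [real_inner_comm]; exact hγN s
  have hBγ : ∀ s, ⟪B s, γ s⟫ = 0 := fun s => by rw [real_inner_comm]; exact hγB s
  have hNT : ∀ s, ⟪N s, T s⟫ = 0 := fun s => by rw [real_inner_comm]; exact hTN s
  have hBT : ∀ s, ⟪B s, T s⟫ = 0 := fun s => by rw [real_inner_comm]; exact hTB s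
  have hBN : ∀ s, ⟪B s, N s⟫ = 0 := fun s => by rw [real_inner_comm]; exact hNB s
  -- the s-derivative of β, expressed in the moving frame
  set g : ℝ → EuclideanSpace ℝ (Fin 4) := fun t =>
      (p - a * q * Real.cos (σ₂ t)) • T (σ₁ t)
        + (-(b * q * Real.sin (σ₂ t))) • N (σ₁ t)
        + (b * q * Real.cos (σ₂ t)) • B (σ₁ t) with hgdef
  have hβs : ∀ ψ s, HasDerivAt (fun u => β u ψ)
      ((p - a * q * Real.cos ψ) • T s + (-(b * q * Real.sin ψ)) • N s
        + (b * q * Real.cos ψ) • B s) s := by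
    intro ψ s
    have h1 : (fun u => β u ψ)
        = fun u => p • γ u + (q * Real.cos ψ) • N u + (q * Real.sin ψ) • B u :=
      funext fun u => hβ u ψ
    rw [h1]
    have H := (((dγ s).const_smul p).add ((dN s).const_smul (q * Real.cos ψ))).add
      ((dB s).const_smul (q * Real.sin ψ))
    refine H.congr_deriv ?_
    module
  have hgA : ∀ t, deriv (fun u => β u (σ₂ t)) (σ₁ t) = g t := fun t =>
    (hβs (σ₂ t) (σ₁ t)).deriv
  -- explicit form of x
  have hxeq : x = fun t => p • γ (σ₁ t) + (q * Real.cos (σ₂ t)) • N (σ₁ t)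
      + (q * Real.sin (σ₂ t)) • B (σ₁ t) := funext fun t => by rw [hx t, hβ]
  -- derivative of x
  have hX : ∀ t, HasDerivAt x
      ((deriv σ₁ t) • g t + (deriv σ₂ t) • ((-(q * Real.sin (σ₂ t))) • N (σ₁ t)
        + (q * Real.cos (σ₂ t)) • B (σ₁ t))) t := by
    intro t
    rw [hxeq]
    have hcos : HasDerivAt (fun t => q * Real.cos (σ₂ t))
        (q * (-Real.sin (σ₂ t) * deriv σ₂ t)) t :=
      (((Real.hasDerivAt_cos (σ₂ t)).comp t (dσ₂ t))).const_mul q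
    have hsin : HasDerivAt (fun t => q * Real.sin (σ₂ t))
        (q * (Real.cos (σ₂ t) * deriv σ₂ t)) t :=
      (((Real.hasDerivAt_sin (σ₂ t)).comp t (dσ₂ t))).const_mul q
    have H := (((HasDerivAt.scomp t (dγ (σ₁ t)) (dσ₁ t)).const_smul p).add
      (hcos.smul (HasDerivAt.scomp t (dN (σ₁ t)) (dσ₁ t)))).add
      (hsin.smul (HasDerivAt.scomp t (dB (σ₁ t)) (dσ₁ t)))
    simp only [Function.comp_def] at H
    refine H.congr_deriv ?_
    simp only [hgdef]
    module
  -- smoothness of x, hence differentiability of deriv x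
  have hxC : ContDiff ℝ (⊤ : ℕ∞) x := by
    rw [hxeq]
    fun_prop
  have hdxd : Differentiable ℝ (deriv x) := ((contDiff_infty_iff_deriv.mp (hxC.of_le (by simp))).2).differentiable (by simp)
  have ddx : ∀ t, HasDerivAt (deriv x) (deriv (deriv x) t) t := fun t => (hdxd t).hasDerivAt
  -- derivative of g
  have hD : ∀ t, HasDerivAt g
      ((-(deriv σ₁ t * (p - a * q * Real.cos (σ₂ t)))) • γ (σ₁ t)
        + (a * q * Real.sin (σ₂ t) * deriv σ₂ t + deriv σ₁ t * (a * b * q * Real.sin (σ₂ t))) • T (σ₁ t)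
        + (-(b * q * Real.cos (σ₂ t) * deriv σ₂ t)
            + deriv σ₁ t * (a * (p - a * q * Real.cos (σ₂ t)) - b * (b * q * Real.cos (σ₂ t)))) • N (σ₁ t)
        + (-(b * q * Real.sin (σ₂ t) * deriv σ₂ t)
            + deriv σ₁ t * (b * (-(b * q * Real.sin (σ₂ t))))) • B (σ₁ t)) t := by
    intro t
    have hc1 : HasDerivAt (fun t => p - a * q * Real.cos (σ₂ t))
        (-(a * q * (-Real.sin (σ₂ t) * deriv σ₂ t))) t :=
      ((((Real.hasDerivAt_cos (σ₂ t)).comp t (dσ₂ t))).const_mul (a * q)).const_sub p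
    have hc2 : HasDerivAt (fun t => -(b * q * Real.sin (σ₂ t)))
        (-(b * q * (Real.cos (σ₂ t) * deriv σ₂ t))) t :=
      ((((Real.hasDerivAt_sin (σ₂ t)).comp t (dσ₂ t))).const_mul (b * q)).neg
    have hc3 : HasDerivAt (fun t => b * q * Real.cos (σ₂ t))
        (b * q * (-Real.sin (σ₂ t) * deriv σ₂ t)) t :=
      (((Real.hasDerivAt_cos (σ₂ t)).comp t (dσ₂ t))).const_mul (b * q)
    have H := ((hc1.smul (HasDerivAt.scomp t (dT (σ₁ t)) (dσ₁ t))).add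
      (hc2.smul (HasDerivAt.scomp t (dN (σ₁ t)) (dσ₁ t)))).add
      (hc3.smul (HasDerivAt.scomp t (dB (σ₁ t)) (dσ₁ t)))
    simp only [Function.comp_def] at H
    rw [hgdef]
    refine H.congr_deriv ?_
    module
  -- the Noether function has vanishing derivative
  have hf0 : ∀ t, HasDerivAt (fun t => ⟪deriv x t, g t⟫) 0 t := by
    intro t
    have H := HasDerivAt.inner ℝ (ddx t) (hD t)
    have e1 : ⟪deriv (deriv x) t, g t⟫ = 0 := by rw [← hgA t]; exact hgeo_s t
    have e2 : ⟪deriv x t,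
        (-(deriv σ₁ t * (p - a * q * Real.cos (σ₂ t)))) • γ (σ₁ t)
        + (a * q * Real.sin (σ₂ t) * deriv σ₂ t + deriv σ₁ t * (a * b * q * Real.sin (σ₂ t))) • T (σ₁ t)
        + (-(b * q * Real.cos (σ₂ t) * deriv σ₂ t)
            + deriv σ₁ t * (a * (p - a * q * Real.cos (σ₂ t)) - b * (b * q * Real.cos (σ₂ t)))) • N (σ₁ t)
        + (-(b * q * Real.sin (σ₂ t) * deriv σ₂ t)
            + deriv σ₁ t * (b * (-(b * q * Real.sin (σ₂ t))))) • B (σ₁ t)⟫ = 0 := by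
      rw [(hX t).deriv]
      simp only [hgdef, inner_add_left, inner_add_right, real_inner_smul_left,
        real_inner_smul_right, hTT, hNN, hBB, hγT, hγN, hγB, hTN, hTB, hNB,
        hTγ, hNγ, hBγ, hNT, hBT, hBN]
      ring
    have H' := H
    rw [e2] at H'
    rw [e1] at H'
    simpa using H'
  have hdiff : Differentiable ℝ (fun t => ⟪deriv x t, g t⟫) := fun t => (hf0 t).differentiableAt
  have hder : ∀ t, deriv (fun t => ⟪deriv x t, g t⟫) t = 0 := fun t => (hf0 t).deriv
  refine ⟨⟪deriv x 0, g 0⟫, fun t => ?_⟩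
  rw [hgA t]
  exact is_const_of_deriv_eq_zero hdiff hder t 0
end

section
/- Suppose the curvature scalars k₁ and k₂ of γ are constant functions. Let ρ₀ > 0, let β(s,ψ) = cosh(ρ₀) γ(s) + sinh(ρ₀)(cos(ψ) N(s) + sin(ψ) B(s)) be the geodesic tube of radius ρ₀ about γ in H³, let σ₁, σ₂ : ℝ → ℝ be smooth, and set x(t) = β(σ₁(t), σ₂(t)). If x is a geodesic of the tube, i.e. for every t the acceleration x''(t) is ⟪·,·⟫-orthogonal to both ∂β/∂s and ∂β/∂ψ evaluated at (σ₁(t), σ₂(t)), then the function t ↦ ⟪x'(t), (∂β/∂s)(σ₁(t), σ₂(t))⟫ is constant. (This is the linear Noether integral establishing integrability of the geodesic flow on tubes about constant-curvature curves in the space form H³.) -/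
open Real

def mink (x y : Fin 4 → ℝ) : ℝ := x 0 * y 0 + x 1 * y 1 + x 2 * y 2 - x 3 * y 3

lemma mink_hasDerivAt {u v : ℝ → Fin 4 → ℝ} {u' v' : Fin 4 → ℝ} {t : ℝ}
    (hu : HasDerivAt u u' t) (hv : HasDerivAt v v' t) :
    HasDerivAt (fun t => mink (u t) (v t)) (mink u' (v t) + mink (u t) v') t := by
  have hu' := hasDerivAt_pi.mp hu
  have hv' := hasDerivAt_pi.mp hv
  have h := ((((hu' 0).mul (hv' 0)).add ((hu' 1).mul (hv' 1))).add
      ((hu' 2).mul (hv' 2))).sub ((hu' 3).mul (hv' 3))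
  refine h.congr_deriv ?_
  simp only [mink]; ring

lemma mink_frame (g t n b : Fin 4 → ℝ)
    (hgg : mink g g = -1) (htt : mink t t = 1) (hnn : mink n n = 1) (hbb : mink b b = 1)
    (hgt : mink g t = 0) (hgn : mink g n = 0) (hgb : mink g b = 0)
    (htn : mink t n = 0) (htb : mink t b = 0) (hnb : mink n b = 0)
    (ag aT an ab bg bt bn bb : ℝ) :
    mink (ag•g + aT•t + an•n + ab•b) (bg•g + bt•t + bn•n + bb•b)
    = -(ag*bg) + aT*bt + an*bn + ab*bb := by
  simp only [mink, Pi.add_apply, Pi.smul_apply, smul_eq_mul] at *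
  linear_combination (ag*bg)*hgg + (aT*bt)*htt + (an*bn)*hnn + (ab*bb)*hbb
    + (ag*bt+aT*bg)*hgt + (ag*bn+an*bg)*hgn + (ag*bb+ab*bg)*hgb
    + (aT*bn+an*bt)*htn + (aT*bb+ab*bt)*htb + (an*bb+ab*bn)*hnb

/-- Noether integral on the geodesic tube of radius `ρ₀` about a constant-curvature curve `γ`
in the hyperboloid model of hyperbolic 3-space `H³`: if `x = β ∘ (σ₁, σ₂)` is a geodesic of
the tube (its acceleration is Minkowski-orthogonal to `∂β/∂s` and `∂β/∂ψ`), then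
`t ↦ ⟪x'(t), (∂β/∂s)(σ₁(t), σ₂(t))⟫` is constant. -/
theorem tube_noether_integral_H3
    (γ N B : ℝ → (Fin 4 → ℝ)) (k₁ k₂ : ℝ → ℝ)
    (hγ : ContDiff ℝ (⊤ : ℕ∞) γ) (hN : ContDiff ℝ (⊤ : ℕ∞) N) (hB : ContDiff ℝ (⊤ : ℕ∞) B)
    (hk₁ : ContDiff ℝ (⊤ : ℕ∞) k₁) (hk₂ : ContDiff ℝ (⊤ : ℕ∞) k₂)
    (hhyp : ∀ s, mink (γ s) (γ s) = -1) (hpos : ∀ s, γ s 3 > 0)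
    (T : ℝ → (Fin 4 → ℝ)) (hT : T = deriv γ)
    (hTT : ∀ s, mink (T s) (T s) = 1) (hNN : ∀ s, mink (N s) (N s) = 1)
    (hBB : ∀ s, mink (B s) (B s) = 1)
    (hγT : ∀ s, mink (γ s) (T s) = 0) (hγN : ∀ s, mink (γ s) (N s) = 0)
    (hγB : ∀ s, mink (γ s) (B s) = 0)
    (hTN : ∀ s, mink (T s) (N s) = 0) (hTB : ∀ s, mink (T s) (B s) = 0)
    (hNB : ∀ s, mink (N s) (B s) = 0)
    (hFS1 : ∀ s, deriv T s = γ s + k₁ s • N s)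
    (hFS2 : ∀ s, deriv N s = -(k₁ s) • T s + k₂ s • B s)
    (hFS3 : ∀ s, deriv B s = -(k₂ s) • N s)
    (hk₁const : ∀ s₁ s₂, k₁ s₁ = k₁ s₂) (hk₂const : ∀ s₁ s₂, k₂ s₁ = k₂ s₂)
    (ρ₀ : ℝ) (hρ₀ : 0 < ρ₀)
    (β : ℝ → ℝ → (Fin 4 → ℝ))
    (hβ : ∀ s ψ, β s ψ = Real.cosh ρ₀ • γ s
        + (Real.sinh ρ₀ * Real.cos ψ) • N s + (Real.sinh ρ₀ * Real.sin ψ) • B s)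
    (σ₁ σ₂ : ℝ → ℝ) (hσ₁ : ContDiff ℝ (⊤ : ℕ∞) σ₁) (hσ₂ : ContDiff ℝ (⊤ : ℕ∞) σ₂)
    (x : ℝ → (Fin 4 → ℝ)) (hx : ∀ t, x t = β (σ₁ t) (σ₂ t))
    (hgeo_s : ∀ t, mink (deriv (deriv x) t) (deriv (fun u => β u (σ₂ t)) (σ₁ t)) = 0)
    (hgeo_ψ : ∀ t, mink (deriv (deriv x) t) (deriv (fun v => β (σ₁ t) v) (σ₂ t)) = 0) :
    ∃ c : ℝ, ∀ t, mink (deriv x t) (deriv (fun u => β u (σ₂ t)) (σ₁ t)) = c := by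
  set K₁ := k₁ 0 with hK1def
  set K₂ := k₂ 0 with hK2def
  set c := Real.cosh ρ₀ with hcdef
  set a := Real.sinh ρ₀ with hadef
  have hk1 : ∀ s, k₁ s = K₁ := fun s => hk₁const s 0
  have hk2 : ∀ s, k₂ s = K₂ := fun s => hk₂const s 0
  -- basic differentiability
  have hγdiff : Differentiable ℝ γ := hγ.differentiable (by simp)
  have hTc : ContDiff ℝ ((⊤:ℕ∞) : WithTop ℕ∞) T := by
    rw [hT]; exact (contDiff_infty_iff_deriv.mp (hγ.of_le (by simp))).2
  have hTdiff : Differentiable ℝ T := hTc.differentiable (by simp)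
  have hNdiff : Differentiable ℝ N := hN.differentiable (by simp)
  have hBdiff : Differentiable ℝ B := hB.differentiable (by simp)
  have hσ₁diff : Differentiable ℝ σ₁ := hσ₁.differentiable (by simp)
  have hσ₂diff : Differentiable ℝ σ₂ := hσ₂.differentiable (by simp)
  obtain ⟨s₁, hs₁def⟩ : ∃ f : ℝ → ℝ, f = deriv σ₁ := ⟨_, rfl⟩
  obtain ⟨s₂, hs₂def⟩ : ∃ f : ℝ → ℝ, f = deriv σ₂ := ⟨_, rfl⟩
  have hs₁diff : Differentiable ℝ s₁ := by
    rw [hs₁def]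
    exact ((contDiff_infty_iff_deriv.mp (hσ₁.of_le (by simp))).2).differentiable
      (by simp)
  have hs₂diff : Differentiable ℝ s₂ := by
    rw [hs₂def]
    exact ((contDiff_infty_iff_deriv.mp (hσ₂.of_le (by simp))).2).differentiable
      (by simp)
  -- Frenet-Serret as HasDerivAt
  have hγd : ∀ s, HasDerivAt γ (T s) s := fun s => by
    rw [hT]; exact (hγdiff s).hasDerivAt
  have hTd : ∀ s, HasDerivAt T (γ s + K₁ • N s) s := fun s => by
    have h := (hTdiff s).hasDerivAt
    rwa [hFS1 s, hk1 s] at h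
  have hNd : ∀ s, HasDerivAt N (-K₁ • T s + K₂ • B s) s := fun s => by
    have h := (hNdiff s).hasDerivAt
    rwa [hFS2 s, hk1 s, hk2 s] at h
  have hBd : ∀ s, HasDerivAt B (-K₂ • N s) s := fun s => by
    have h := (hBdiff s).hasDerivAt
    rwa [hFS3 s, hk2 s] at h
  have hσ₁d : ∀ t, HasDerivAt σ₁ (s₁ t) t := fun t => by
    rw [hs₁def]; exact (hσ₁diff t).hasDerivAt
  have hσ₂d : ∀ t, HasDerivAt σ₂ (s₂ t) t := fun t => by
    rw [hs₂def]; exact (hσ₂diff t).hasDerivAt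
  -- the tangent field ∂β/∂s
  obtain ⟨Bs, hBsdef⟩ : ∃ f : ℝ → ℝ → (Fin 4 → ℝ), f = fun s ψ =>
      (c - K₁*a*Real.cos ψ) • T s + (-(K₂*a*Real.sin ψ)) • N s + (K₂*a*Real.cos ψ) • B s :=
    ⟨_, rfl⟩
  have hBsd : ∀ (ψ s : ℝ), HasDerivAt (fun u => β u ψ) (Bs s ψ) s := by
    intro ψ s
    have heq : (fun u => β u ψ)
        = fun u => c • γ u + (a * Real.cos ψ) • N u + (a * Real.sin ψ) • B u :=
      funext fun u => hβ u ψ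
    rw [heq]
    have h := (((hγd s).const_smul c).add ((hNd s).const_smul (a * Real.cos ψ))).add
      ((hBd s).const_smul (a * Real.sin ψ))
    refine h.congr_deriv ?_
    simp only [hBsdef]
    module
  have hBsderiv : ∀ (ψ s : ℝ), deriv (fun u => β u ψ) s = Bs s ψ :=
    fun ψ s => (hBsd ψ s).deriv
  -- the velocity of x
  obtain ⟨X', hX'def⟩ : ∃ f : ℝ → (Fin 4 → ℝ), f = fun t =>
      (s₁ t * (c - K₁*a*Real.cos (σ₂ t))) • T (σ₁ t)
      + (-(a*Real.sin (σ₂ t)) * (s₂ t + K₂ * s₁ t)) • N (σ₁ t)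
      + ((a*Real.cos (σ₂ t)) * (s₂ t + K₂ * s₁ t)) • B (σ₁ t) := ⟨_, rfl⟩
  have hxd : ∀ t, HasDerivAt x (X' t) t := by
    intro t
    have heq : x = fun t => c • γ (σ₁ t) + (a * Real.cos (σ₂ t)) • N (σ₁ t)
        + (a * Real.sin (σ₂ t)) • B (σ₁ t) := funext fun t => by rw [hx t, hβ]
    rw [heq]
    have h1 : HasDerivAt (fun t => γ (σ₁ t)) (s₁ t • T (σ₁ t)) t :=
      HasDerivAt.scomp t (hγd (σ₁ t)) (hσ₁d t)
    have h2 : HasDerivAt (fun t => N (σ₁ t)) (s₁ t • (-K₁ • T (σ₁ t) + K₂ • B (σ₁ t))) t :=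
      HasDerivAt.scomp t (hNd (σ₁ t)) (hσ₁d t)
    have h3 : HasDerivAt (fun t => B (σ₁ t)) (s₁ t • (-K₂ • N (σ₁ t))) t :=
      HasDerivAt.scomp t (hBd (σ₁ t)) (hσ₁d t)
    have hc2 : HasDerivAt (fun t => a * Real.cos (σ₂ t)) (a * (-Real.sin (σ₂ t) * s₂ t)) t :=
      ((Real.hasDerivAt_cos (σ₂ t)).comp t (hσ₂d t)).const_mul a
    have hs2 : HasDerivAt (fun t => a * Real.sin (σ₂ t)) (a * (Real.cos (σ₂ t) * s₂ t)) t :=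
      ((Real.hasDerivAt_sin (σ₂ t)).comp t (hσ₂d t)).const_mul a
    have h := ((h1.const_smul c).add (hc2.smul h2)).add (hs2.smul h3)
    refine h.congr_deriv ?_
    simp only [hX'def]
    module
  have hxderiv : deriv x = X' := funext fun t => (hxd t).deriv
  -- differentiability of the velocity
  have hX'diff : ∀ t, DifferentiableAt ℝ X' t := by
    intro t
    rw [hX'def]
    fun_prop
  have hA : ∀ t, HasDerivAt (deriv x) (deriv (deriv x) t) t := by
    intro t
    have h := (hX'diff t).hasDerivAt
    rw [← hxderiv] at h
    exact h
  -- derivative of t ↦ Bs (σ₁ t) (σ₂ t)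
  obtain ⟨Ws, hWsdef⟩ : ∃ f : ℝ → (Fin 4 → ℝ), f = fun t =>
      ((c - K₁*a*Real.cos (σ₂ t)) * s₁ t) • γ (σ₁ t)
      + (K₁*a*Real.sin (σ₂ t) * s₂ t + K₁*K₂*a*Real.sin (σ₂ t) * s₁ t) • T (σ₁ t)
      + (K₁ * s₁ t * (c - K₁*a*Real.cos (σ₂ t)) - K₂*a*Real.cos (σ₂ t) * s₂ t
          - K₂^2*a*Real.cos (σ₂ t) * s₁ t) • N (σ₁ t)
      + (-(K₂*a*Real.sin (σ₂ t) * (K₂ * s₁ t + s₂ t))) • B (σ₁ t) := ⟨_, rfl⟩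
  have hWsd : ∀ t, HasDerivAt (fun t => Bs (σ₁ t) (σ₂ t)) (Ws t) t := by
    intro t
    simp only [hBsdef]
    have hT1 : HasDerivAt (fun t => T (σ₁ t)) (s₁ t • (γ (σ₁ t) + K₁ • N (σ₁ t))) t :=
      HasDerivAt.scomp t (hTd (σ₁ t)) (hσ₁d t)
    have hN1 : HasDerivAt (fun t => N (σ₁ t)) (s₁ t • (-K₁ • T (σ₁ t) + K₂ • B (σ₁ t))) t :=
      HasDerivAt.scomp t (hNd (σ₁ t)) (hσ₁d t)
    have hB1 : HasDerivAt (fun t => B (σ₁ t)) (s₁ t • (-K₂ • N (σ₁ t))) t :=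
      HasDerivAt.scomp t (hBd (σ₁ t)) (hσ₁d t)
    have hcos : HasDerivAt (fun t => Real.cos (σ₂ t)) (-Real.sin (σ₂ t) * s₂ t) t :=
      (Real.hasDerivAt_cos (σ₂ t)).comp t (hσ₂d t)
    have hsin : HasDerivAt (fun t => Real.sin (σ₂ t)) (Real.cos (σ₂ t) * s₂ t) t :=
      (Real.hasDerivAt_sin (σ₂ t)).comp t (hσ₂d t)
    have hc1 : HasDerivAt (fun t => c - K₁*a*Real.cos (σ₂ t))
        (-(K₁*a * (-Real.sin (σ₂ t) * s₂ t))) t := (hcos.const_mul (K₁*a)).const_sub c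
    have hc2 : HasDerivAt (fun t => -(K₂*a*Real.sin (σ₂ t)))
        (-(K₂*a * (Real.cos (σ₂ t) * s₂ t))) t := ((hsin.const_mul (K₂*a))).neg
    have hc3 : HasDerivAt (fun t => K₂*a*Real.cos (σ₂ t))
        (K₂*a * (-Real.sin (σ₂ t) * s₂ t)) t := hcos.const_mul (K₂*a)
    have h := ((hc1.smul hT1).add (hc2.smul hN1)).add (hc3.smul hB1)
    refine h.congr_deriv ?_
    simp only [hWsdef]
    module
  -- the key orthogonality: ⟪X', Ws⟫ = 0
  have hperp : ∀ t, mink (X' t) (Ws t) = 0 := by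
    intro t
    have hXf : X' t = (0:ℝ) • γ (σ₁ t)
        + (s₁ t * (c - K₁*a*Real.cos (σ₂ t))) • T (σ₁ t)
        + (-(a*Real.sin (σ₂ t)) * (s₂ t + K₂ * s₁ t)) • N (σ₁ t)
        + ((a*Real.cos (σ₂ t)) * (s₂ t + K₂ * s₁ t)) • B (σ₁ t) := by
      simp only [hX'def]; module
    rw [hXf]
    simp only [hWsdef]
    rw [mink_frame _ _ _ _ (hhyp _) (hTT _) (hNN _) (hBB _) (hγT _) (hγN _) (hγB _)
      (hTN _) (hTB _) (hNB _)]
    ring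
  -- the Noether quantity has zero derivative
  have hFd : ∀ t, HasDerivAt
      (fun t => mink (deriv x t) (deriv (fun u => β u (σ₂ t)) (σ₁ t))) 0 t := by
    intro t
    have heqF : (fun t => mink (deriv x t) (deriv (fun u => β u (σ₂ t)) (σ₁ t)))
        = fun t => mink (deriv x t) (Bs (σ₁ t) (σ₂ t)) :=
      funext fun t => by rw [hBsderiv]
    rw [heqF]
    have h := mink_hasDerivAt (hA t) (hWsd t)
    convert h using 1
    have hz1 : mink (deriv (deriv x) t) (Bs (σ₁ t) (σ₂ t)) = 0 := by
      rw [← hBsderiv]; exact hgeo_s t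
    have hz2 : mink (deriv x t) (Ws t) = 0 := by
      rw [hxderiv]; exact hperp t
    rw [hz1, hz2]; norm_num
  refine ⟨mink (deriv x 0) (deriv (fun u => β u (σ₂ 0)) (σ₁ 0)), fun t => ?_⟩
  exact is_const_of_deriv_eq_zero (fun t => (hFd t).differentiableAt)
    (fun t => (hFd t).deriv) t 0
end

section
/- Let r, φ : ℝ → ℝ be smooth and let β(s,ψ) = cos(r(ψ)) γ(s) + sin(r(ψ))(cos(φ(ψ)) N(s) + sin(φ(ψ)) B(s)) be the generalized tube about γ in S³ (the image under the spherical exponential map of the curve ψ ↦ (r(ψ)cos φ(ψ), r(ψ)sin φ(ψ)) in the normal plane). Then for all (s,ψ): ⟨∂β/∂s, ∂β/∂s⟩ = (cos r(ψ) − k₁(s) sin r(ψ) cos φ(ψ))² + k₂(s)² sin² r(ψ), ⟨∂β/∂s, ∂β/∂ψ⟩ = k₂(s) sin² r(ψ) · φ'(ψ), and ⟨∂β/∂ψ, ∂β/∂ψ⟩ = r'(ψ)² + sin² r(ψ) · φ'(ψ)². In particular, the coordinate s enters these coefficients only through the curvature scalars k₁(s) and k₂(s). -/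
open Real
open scoped RealInnerProductSpace

/-- The generalized tube `β(s,ψ) = cos(r(ψ)) γ(s) + sin(r(ψ))(cos(φ(ψ)) N(s) + sin(φ(ψ)) B(s))`
about a curve `γ` on the unit 3-sphere `S³ ⊂ ℝ⁴` has first fundamental form coefficients
`E = (cos r − k₁ sin r cos φ)² + k₂² sin² r`, `F = k₂ sin² r · φ'`, `G = r'² + sin² r · φ'²`;
in particular `s` enters only through the curvature scalars `k₁(s), k₂(s)`. -/
theorem generalized_tube_first_fundamental_form_S3
    (γ N B : ℝ → EuclideanSpace ℝ (Fin 4)) (k₁ k₂ : ℝ → ℝ)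
    (hγ : ContDiff ℝ (⊤ : ℕ∞) γ) (hN : ContDiff ℝ (⊤ : ℕ∞) N) (hB : ContDiff ℝ (⊤ : ℕ∞) B)
    (hk₁ : ContDiff ℝ (⊤ : ℕ∞) k₁) (hk₂ : ContDiff ℝ (⊤ : ℕ∞) k₂)
    (hsphere : ∀ s, ‖γ s‖ = 1)
    (T : ℝ → EuclideanSpace ℝ (Fin 4)) (hT : T = deriv γ)
    (hTT : ∀ s, ⟪T s, T s⟫ = 1) (hNN : ∀ s, ⟪N s, N s⟫ = 1) (hBB : ∀ s, ⟪B s, B s⟫ = 1)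
    (hγT : ∀ s, ⟪γ s, T s⟫ = 0) (hγN : ∀ s, ⟪γ s, N s⟫ = 0) (hγB : ∀ s, ⟪γ s, B s⟫ = 0)
    (hTN : ∀ s, ⟪T s, N s⟫ = 0) (hTB : ∀ s, ⟪T s, B s⟫ = 0) (hNB : ∀ s, ⟪N s, B s⟫ = 0)
    (hFS1 : ∀ s, deriv T s = -γ s + k₁ s • N s)
    (hFS2 : ∀ s, deriv N s = -(k₁ s) • T s + k₂ s • B s)
    (hFS3 : ∀ s, deriv B s = -(k₂ s) • N s)
    (r φ : ℝ → ℝ) (hr : ContDiff ℝ (⊤ : ℕ∞) r) (hφ : ContDiff ℝ (⊤ : ℕ∞) φ)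
    (β : ℝ → ℝ → EuclideanSpace ℝ (Fin 4))
    (hβ : ∀ s ψ, β s ψ = Real.cos (r ψ) • γ s
        + (Real.sin (r ψ) * Real.cos (φ ψ)) • N s + (Real.sin (r ψ) * Real.sin (φ ψ)) • B s) :
    ∀ s ψ : ℝ,
      ⟪deriv (fun u => β u ψ) s, deriv (fun u => β u ψ) s⟫
          = (Real.cos (r ψ) - k₁ s * Real.sin (r ψ) * Real.cos (φ ψ)) ^ 2
            + (k₂ s) ^ 2 * (Real.sin (r ψ)) ^ 2 ∧
      ⟪deriv (fun u => β u ψ) s, deriv (fun v => β s v) ψ⟫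
          = k₂ s * (Real.sin (r ψ)) ^ 2 * deriv φ ψ ∧
      ⟪deriv (fun v => β s v) ψ, deriv (fun v => β s v) ψ⟫
          = (deriv r ψ) ^ 2 + (Real.sin (r ψ)) ^ 2 * (deriv φ ψ) ^ 2 := by
  intro s ψ
  have hγd : DifferentiableAt ℝ γ s := (hγ.differentiable (by simp)).differentiableAt
  have hNd : DifferentiableAt ℝ N s := (hN.differentiable (by simp)).differentiableAt
  have hBd : DifferentiableAt ℝ B s := (hB.differentiable (by simp)).differentiableAt
  have hrd : HasDerivAt r (deriv r ψ) ψ :=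
    ((hr.differentiable (by simp)).differentiableAt).hasDerivAt
  have hφd : HasDerivAt φ (deriv φ ψ) ψ :=
    ((hφ.differentiable (by simp)).differentiableAt).hasDerivAt
  set c1 := Real.cos (r ψ)
  set c2 := Real.sin (r ψ) * Real.cos (φ ψ)
  set c3 := Real.sin (r ψ) * Real.sin (φ ψ)
  -- derivative in s
  have hfun1 : (fun u => β u ψ) = fun u => c1 • γ u + c2 • N u + c3 • B u :=
    funext fun u => hβ u ψ
  have hDs : HasDerivAt (fun u => β u ψ)
      (c1 • deriv γ s + c2 • deriv N s + c3 • deriv B s) s := by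
    rw [hfun1]
    exact ((hγd.hasDerivAt.const_smul c1).add (hNd.hasDerivAt.const_smul c2)).add
      (hBd.hasDerivAt.const_smul c3)
  have hDs' : deriv (fun u => β u ψ) s
      = c1 • T s + c2 • (-(k₁ s) • T s + k₂ s • B s) + c3 • (-(k₂ s) • N s) := by
    rw [hDs.deriv, hFS2, hFS3, hT]
  -- derivative in ψ
  have hfun2 : (fun v => β s v) = fun v =>
      Real.cos (r v) • γ s + (Real.sin (r v) * Real.cos (φ v)) • N s
        + (Real.sin (r v) * Real.sin (φ v)) • B s :=
    funext fun v => hβ s v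
  have hc : HasDerivAt (fun v => Real.cos (r v)) (-Real.sin (r ψ) * deriv r ψ) ψ := hrd.cos
  have hsc : HasDerivAt (fun v => Real.sin (r v) * Real.cos (φ v))
      ((Real.cos (r ψ) * deriv r ψ) * Real.cos (φ ψ)
        + Real.sin (r ψ) * (-Real.sin (φ ψ) * deriv φ ψ)) ψ := hrd.sin.mul hφd.cos
  have hss : HasDerivAt (fun v => Real.sin (r v) * Real.sin (φ v))
      ((Real.cos (r ψ) * deriv r ψ) * Real.sin (φ ψ)
        + Real.sin (r ψ) * (Real.cos (φ ψ) * deriv φ ψ)) ψ := hrd.sin.mul hφd.sin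
  have hDψ : HasDerivAt (fun v => β s v)
      ((-Real.sin (r ψ) * deriv r ψ) • γ s
        + ((Real.cos (r ψ) * deriv r ψ) * Real.cos (φ ψ)
            + Real.sin (r ψ) * (-Real.sin (φ ψ) * deriv φ ψ)) • N s
        + ((Real.cos (r ψ) * deriv r ψ) * Real.sin (φ ψ)
            + Real.sin (r ψ) * (Real.cos (φ ψ) * deriv φ ψ)) • B s) ψ := by
    rw [hfun2]
    exact ((hc.smul_const (γ s)).add (hsc.smul_const (N s))).add (hss.smul_const (B s))
  have hDψ' := hDψ.deriv
  -- symmetric orthogonality facts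
  have hNT : ⟪N s, T s⟫ = 0 := by rw [real_inner_comm]; exact hTN s
  have hBT : ⟪B s, T s⟫ = 0 := by rw [real_inner_comm]; exact hTB s
  have hBN : ⟪B s, N s⟫ = 0 := by rw [real_inner_comm]; exact hNB s
  have hTγ : ⟪T s, γ s⟫ = 0 := by rw [real_inner_comm]; exact hγT s
  have hNγ : ⟪N s, γ s⟫ = 0 := by rw [real_inner_comm]; exact hγN s
  have hBγ : ⟪B s, γ s⟫ = 0 := by rw [real_inner_comm]; exact hγB s
  have hγγ : ⟪γ s, γ s⟫ = 1 := by
    rw [real_inner_self_eq_norm_sq, hsphere s]; norm_num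
  refine ⟨?_, ?_, ?_⟩
  · rw [hDs']
    simp only [inner_add_left, inner_add_right, real_inner_smul_left, real_inner_smul_right,
      inner_neg_left, inner_neg_right, hTT s, hNN s, hBB s, hγT s, hγN s, hγB s,
      hTN s, hTB s, hNB s, hNT, hBT, hBN, hTγ, hNγ, hBγ, hγγ, neg_smul]
    simp only [c2, c3]
    linear_combination (Real.sin (r ψ) ^ 2 * k₂ s ^ 2) * Real.sin_sq_add_cos_sq (φ ψ)
  · rw [hDs', hDψ']
    simp only [inner_add_left, inner_add_right, real_inner_smul_left, real_inner_smul_right,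
      inner_neg_left, inner_neg_right, hTT s, hNN s, hBB s, hγT s, hγN s, hγB s,
      hTN s, hTB s, hNB s, hNT, hBT, hBN, hTγ, hNγ, hBγ, hγγ, neg_smul]
    simp only [c2, c3]
    linear_combination (Real.sin (r ψ) ^ 2 * k₂ s * deriv φ ψ) * Real.sin_sq_add_cos_sq (φ ψ)
  · rw [hDψ']
    simp only [inner_add_left, inner_add_right, real_inner_smul_left, real_inner_smul_right,
      hTT s, hNN s, hBB s, hγT s, hγN s, hγB s,
      hTN s, hTB s, hNB s, hNT, hBT, hBN, hTγ, hNγ, hBγ, hγγ]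
    linear_combination (Real.sin (r ψ) ^ 2 * deriv φ ψ ^ 2
        + deriv r ψ ^ 2 * Real.cos (r ψ) ^ 2) * Real.sin_sq_add_cos_sq (φ ψ)
      + deriv r ψ ^ 2 * Real.sin_sq_add_cos_sq (r ψ)
end

section
/- Suppose the curvature scalars k₁ and k₂ of γ are constant functions. Let r, φ : ℝ → ℝ be smooth, let β(s,ψ) = cos(r(ψ)) γ(s) + sin(r(ψ))(cos(φ(ψ)) N(s) + sin(φ(ψ)) B(s)) be the generalized tube about γ in S³, let σ₁, σ₂ : ℝ → ℝ be smooth, and set x(t) = β(σ₁(t), σ₂(t)). If x is a geodesic of the generalized tube, i.e. for every t the acceleration x''(t) is orthogonal (in ℝ⁴) to both ∂β/∂s and ∂β/∂ψ evaluated at (σ₁(t), σ₂(t)), then the function t ↦ ⟨x'(t), (∂β/∂s)(σ₁(t), σ₂(t))⟩ is constant. -/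
open Real
open scoped RealInnerProductSpace

private noncomputable def Ybody (γ T N B : ℝ → EuclideanSpace ℝ (Fin 4)) (K₁ K₂ : ℝ)
    (a b c σ₁ σ₂ : ℝ → ℝ) : ℝ → EuclideanSpace ℝ (Fin 4) := fun t =>
  (a (σ₂ t) • (deriv σ₁ t • T (σ₁ t)) + (deriv a (σ₂ t) * deriv σ₂ t) • γ (σ₁ t))
  + (b (σ₂ t) • (deriv σ₁ t • ((-K₁) • T (σ₁ t) + K₂ • B (σ₁ t)))
      + (deriv b (σ₂ t) * deriv σ₂ t) • N (σ₁ t))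
  + (c (σ₂ t) • (deriv σ₁ t • ((-K₂) • N (σ₁ t)))
      + (deriv c (σ₂ t) * deriv σ₂ t) • B (σ₁ t))

private noncomputable def Dbody (T N B : ℝ → EuclideanSpace ℝ (Fin 4)) (K₁ K₂ : ℝ)
    (a b c σ₁ σ₂ : ℝ → ℝ) : ℝ → EuclideanSpace ℝ (Fin 4) := fun t =>
  a (σ₂ t) • T (σ₁ t) + b (σ₂ t) • ((-K₁) • T (σ₁ t) + K₂ • B (σ₁ t))
    + c (σ₂ t) • ((-K₂) • N (σ₁ t))

private lemma hasDerivAt_congr_deriv' {F : Type*} [NormedAddCommGroup F] [NormedSpace ℝ F]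
    {f : ℝ → F} {v w : F} {t : ℝ} (h : HasDerivAt f v t) (e : v = w) : HasDerivAt f w t :=
  e ▸ h

private lemma one_le_inftyNat : (1 : WithTop ℕ∞) ≤ ((⊤ : ℕ∞) : WithTop ℕ∞) := by
  exact_mod_cast le_top

private lemma derivs_of_contDiff' (f : ℝ → ℝ)
    (hf : ContDiff ℝ ((⊤ : ℕ∞) : WithTop ℕ∞) f) :
    (∀ u, HasDerivAt f (deriv f u) u) ∧
      (∀ u, HasDerivAt (deriv f) (deriv (deriv f) u) u) := by
  refine ⟨fun u => (hf.differentiable (by simp) u).hasDerivAt, fun u => ?_⟩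
  exact (((contDiff_infty_iff_deriv.mp hf).2).differentiable (by simp) u).hasDerivAt

private theorem tube_aux
    (γ T N B : ℝ → EuclideanSpace ℝ (Fin 4)) (K₁ K₂ : ℝ)
    (hγd : ∀ s, HasDerivAt γ (T s) s)
    (hTd : ∀ s, HasDerivAt T (-γ s + K₁ • N s) s)
    (hNd : ∀ s, HasDerivAt N ((-K₁) • T s + K₂ • B s) s)
    (hBd : ∀ s, HasDerivAt B ((-K₂) • N s) s)
    (hγγ : ∀ s, ⟪γ s, γ s⟫ = 1) (hTT : ∀ s, ⟪T s, T s⟫ = 1)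
    (hNN : ∀ s, ⟪N s, N s⟫ = 1) (hBB : ∀ s, ⟪B s, B s⟫ = 1)
    (hγT : ∀ s, ⟪γ s, T s⟫ = 0) (hγN : ∀ s, ⟪γ s, N s⟫ = 0) (hγB : ∀ s, ⟪γ s, B s⟫ = 0)
    (hTN : ∀ s, ⟪T s, N s⟫ = 0) (hTB : ∀ s, ⟪T s, B s⟫ = 0) (hNB : ∀ s, ⟪N s, B s⟫ = 0)
    (a b c σ₁ σ₂ : ℝ → ℝ)
    (ha1 : ∀ u, HasDerivAt a (deriv a u) u)
    (ha2 : ∀ u, HasDerivAt (deriv a) (deriv (deriv a) u) u)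
    (hb1 : ∀ u, HasDerivAt b (deriv b u) u)
    (hb2 : ∀ u, HasDerivAt (deriv b) (deriv (deriv b) u) u)
    (hc1 : ∀ u, HasDerivAt c (deriv c u) u)
    (hc2 : ∀ u, HasDerivAt (deriv c) (deriv (deriv c) u) u)
    (hs1 : ∀ t, HasDerivAt σ₁ (deriv σ₁ t) t)
    (hs1' : ∀ t, HasDerivAt (deriv σ₁) (deriv (deriv σ₁) t) t)
    (hs2 : ∀ t, HasDerivAt σ₂ (deriv σ₂ t) t)
    (hs2' : ∀ t, HasDerivAt (deriv σ₂) (deriv (deriv σ₂) t) t)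
    (β : ℝ → ℝ → EuclideanSpace ℝ (Fin 4))
    (hβ : ∀ s ψ, β s ψ = a ψ • γ s + b ψ • N s + c ψ • B s)
    (x : ℝ → EuclideanSpace ℝ (Fin 4)) (hx : ∀ t, x t = β (σ₁ t) (σ₂ t))
    (hgeo : ∀ t, ⟪deriv (deriv x) t, deriv (fun u => β u (σ₂ t)) (σ₁ t)⟫ = 0) :
    ∃ c0 : ℝ, ∀ t, ⟪deriv x t, deriv (fun u => β u (σ₂ t)) (σ₁ t)⟫ = c0 := by
  -- reversed inner products
  have hTγ : ∀ s, ⟪T s, γ s⟫ = 0 := fun s => by rw [real_inner_comm]; exact hγT s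
  have hNγ : ∀ s, ⟪N s, γ s⟫ = 0 := fun s => by rw [real_inner_comm]; exact hγN s
  have hBγ : ∀ s, ⟪B s, γ s⟫ = 0 := fun s => by rw [real_inner_comm]; exact hγB s
  have hNT : ∀ s, ⟪N s, T s⟫ = 0 := fun s => by rw [real_inner_comm]; exact hTN s
  have hBT : ∀ s, ⟪B s, T s⟫ = 0 := fun s => by rw [real_inner_comm]; exact hTB s
  have hBN : ∀ s, ⟪B s, N s⟫ = 0 := fun s => by rw [real_inner_comm]; exact hNB s
  -- composite derivative facts
  have hγσ : ∀ t, HasDerivAt (γ ∘ σ₁) (deriv σ₁ t • T (σ₁ t)) t :=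
    fun t => (hγd (σ₁ t)).scomp t (hs1 t)
  have hTσ : ∀ t, HasDerivAt (T ∘ σ₁)
      (deriv σ₁ t • (-γ (σ₁ t) + K₁ • N (σ₁ t))) t :=
    fun t => (hTd (σ₁ t)).scomp t (hs1 t)
  have hNσ : ∀ t, HasDerivAt (N ∘ σ₁)
      (deriv σ₁ t • ((-K₁) • T (σ₁ t) + K₂ • B (σ₁ t))) t :=
    fun t => (hNd (σ₁ t)).scomp t (hs1 t)
  have hBσ : ∀ t, HasDerivAt (B ∘ σ₁)
      (deriv σ₁ t • ((-K₂) • N (σ₁ t))) t :=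
    fun t => (hBd (σ₁ t)).scomp t (hs1 t)
  have haσ : ∀ t, HasDerivAt (a ∘ σ₂) (deriv a (σ₂ t) * deriv σ₂ t) t :=
    fun t => (ha1 (σ₂ t)).comp t (hs2 t)
  have hbσ : ∀ t, HasDerivAt (b ∘ σ₂) (deriv b (σ₂ t) * deriv σ₂ t) t :=
    fun t => (hb1 (σ₂ t)).comp t (hs2 t)
  have hcσ : ∀ t, HasDerivAt (c ∘ σ₂) (deriv c (σ₂ t) * deriv σ₂ t) t :=
    fun t => (hc1 (σ₂ t)).comp t (hs2 t)
  have hdaσ : ∀ t, HasDerivAt (deriv a ∘ σ₂)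
      (deriv (deriv a) (σ₂ t) * deriv σ₂ t) t := fun t => (ha2 (σ₂ t)).comp t (hs2 t)
  have hdbσ : ∀ t, HasDerivAt (deriv b ∘ σ₂)
      (deriv (deriv b) (σ₂ t) * deriv σ₂ t) t := fun t => (hb2 (σ₂ t)).comp t (hs2 t)
  have hdcσ : ∀ t, HasDerivAt (deriv c ∘ σ₂)
      (deriv (deriv c) (σ₂ t) * deriv σ₂ t) t := fun t => (hc2 (σ₂ t)).comp t (hs2 t)
  -- explicit form of x
  have hxe : x = fun t => a (σ₂ t) • γ (σ₁ t) + b (σ₂ t) • N (σ₁ t) + c (σ₂ t) • B (σ₁ t) :=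
    funext fun t => by rw [hx, hβ]
  have hXd : ∀ t, HasDerivAt x (Ybody γ T N B K₁ K₂ a b c σ₁ σ₂ t) t := by
    intro t
    rw [hxe]
    exact (((haσ t).smul (hγσ t)).add ((hbσ t).smul (hNσ t))).add ((hcσ t).smul (hBσ t))
  have hYx : deriv x = Ybody γ T N B K₁ K₂ a b c σ₁ σ₂ := funext fun t => (hXd t).deriv
  have hDs : ∀ t, deriv (fun u => β u (σ₂ t)) (σ₁ t) = Dbody T N B K₁ K₂ a b c σ₁ σ₂ t := by
    intro t
    have hfun : (fun u => β u (σ₂ t))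
        = fun u => a (σ₂ t) • γ u + b (σ₂ t) • N u + c (σ₂ t) • B u :=
      funext fun u => hβ u (σ₂ t)
    rw [hfun]
    exact ((((hγd (σ₁ t)).const_smul (a (σ₂ t))).add
      ((hNd (σ₁ t)).const_smul (b (σ₂ t)))).add ((hBd (σ₁ t)).const_smul (c (σ₂ t)))).deriv
  -- the conserved quantity has zero derivative
  have hGd : ∀ t, HasDerivAt (fun τ => (⟪Ybody γ T N B K₁ K₂ a b c σ₁ σ₂ τ,
      Dbody T N B K₁ K₂ a b c σ₁ σ₂ τ⟫ : ℝ)) 0 t := by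
    intro t
    have hvb : HasDerivAt (fun τ => (-K₁) • T (σ₁ τ) + K₂ • B (σ₁ τ))
        ((-K₁) • (deriv σ₁ t • (-γ (σ₁ t) + K₁ • N (σ₁ t)))
          + K₂ • (deriv σ₁ t • ((-K₂) • N (σ₁ t)))) t :=
      ((hTσ t).const_smul (-K₁)).add ((hBσ t).const_smul K₂)
    have hvc : HasDerivAt (fun τ => (-K₂) • N (σ₁ τ))
        ((-K₂) • (deriv σ₁ t • ((-K₁) • T (σ₁ t) + K₂ • B (σ₁ t)))) t :=
      (hNσ t).const_smul (-K₂)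
    have hYd := ((((haσ t).smul ((hs1' t).smul (hTσ t))).add
        (((hdaσ t).mul (hs2' t)).smul (hγσ t))).add
      (((hbσ t).smul ((hs1' t).smul hvb)).add
        (((hdbσ t).mul (hs2' t)).smul (hNσ t)))).add
      (((hcσ t).smul ((hs1' t).smul hvc)).add
        (((hdcσ t).mul (hs2' t)).smul (hBσ t)))
    have hYD : HasDerivAt (Ybody γ T N B K₁ K₂ a b c σ₁ σ₂) _ t := hYd
    have hDD : HasDerivAt (Dbody T N B K₁ K₂ a b c σ₁ σ₂) _ t :=
      (((haσ t).smul (hTσ t)).add ((hbσ t).smul hvb)).add ((hcσ t).smul hvc)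
    have h := HasDerivAt.inner ℝ hYD hDD
    refine hasDerivAt_congr_deriv' h ?_
    have hg := hgeo t
    rw [hDs t, hYx, hYD.deriv] at hg
    simp only [Ybody, Dbody, Function.comp_apply, inner_add_left, inner_add_right, real_inner_smul_left,
      real_inner_smul_right, inner_neg_left, inner_neg_right,
      hγγ, hTT, hNN, hBB, hγT, hγN, hγB, hTN, hTB, hNB, hTγ, hNγ, hBγ, hNT, hBT, hBN] at hg ⊢
    linear_combination hg
  refine ⟨⟪Ybody γ T N B K₁ K₂ a b c σ₁ σ₂ 0, Dbody T N B K₁ K₂ a b c σ₁ σ₂ 0⟫,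
    fun t => ?_⟩
  rw [hYx, hDs t]
  exact is_const_of_deriv_eq_zero (fun τ => (hGd τ).differentiableAt)
    (fun τ => (hGd τ).deriv) t 0

/-- Noether integral on the generalized tube
`β(s,ψ) = cos(r(ψ)) γ(s) + sin(r(ψ))(cos(φ(ψ)) N(s) + sin(φ(ψ)) B(s))` about a
constant-curvature curve `γ` on the unit 3-sphere `S³ ⊂ ℝ⁴`: if `x = β ∘ (σ₁, σ₂)` is a
geodesic of the generalized tube, then `t ↦ ⟨x'(t), (∂β/∂s)(σ₁(t), σ₂(t))⟩` is constant. -/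
theorem generalized_tube_noether_integral_S3
    (γ N B : ℝ → EuclideanSpace ℝ (Fin 4)) (k₁ k₂ : ℝ → ℝ)
    (hγ : ContDiff ℝ (⊤ : ℕ∞) γ) (hN : ContDiff ℝ (⊤ : ℕ∞) N) (hB : ContDiff ℝ (⊤ : ℕ∞) B)
    (hk₁ : ContDiff ℝ (⊤ : ℕ∞) k₁) (hk₂ : ContDiff ℝ (⊤ : ℕ∞) k₂)
    (hsphere : ∀ s, ‖γ s‖ = 1)
    (T : ℝ → EuclideanSpace ℝ (Fin 4)) (hT : T = deriv γ)
    (hTT : ∀ s, ⟪T s, T s⟫ = 1) (hNN : ∀ s, ⟪N s, N s⟫ = 1) (hBB : ∀ s, ⟪B s, B s⟫ = 1)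
    (hγT : ∀ s, ⟪γ s, T s⟫ = 0) (hγN : ∀ s, ⟪γ s, N s⟫ = 0) (hγB : ∀ s, ⟪γ s, B s⟫ = 0)
    (hTN : ∀ s, ⟪T s, N s⟫ = 0) (hTB : ∀ s, ⟪T s, B s⟫ = 0) (hNB : ∀ s, ⟪N s, B s⟫ = 0)
    (hFS1 : ∀ s, deriv T s = -γ s + k₁ s • N s)
    (hFS2 : ∀ s, deriv N s = -(k₁ s) • T s + k₂ s • B s)
    (hFS3 : ∀ s, deriv B s = -(k₂ s) • N s)
    (hk₁const : ∀ s₁ s₂, k₁ s₁ = k₁ s₂) (hk₂const : ∀ s₁ s₂, k₂ s₁ = k₂ s₂)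
    (r φ : ℝ → ℝ) (hr : ContDiff ℝ (⊤ : ℕ∞) r) (hφ : ContDiff ℝ (⊤ : ℕ∞) φ)
    (β : ℝ → ℝ → EuclideanSpace ℝ (Fin 4))
    (hβ : ∀ s ψ, β s ψ = Real.cos (r ψ) • γ s
        + (Real.sin (r ψ) * Real.cos (φ ψ)) • N s + (Real.sin (r ψ) * Real.sin (φ ψ)) • B s)
    (σ₁ σ₂ : ℝ → ℝ) (hσ₁ : ContDiff ℝ (⊤ : ℕ∞) σ₁) (hσ₂ : ContDiff ℝ (⊤ : ℕ∞) σ₂)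
    (x : ℝ → EuclideanSpace ℝ (Fin 4)) (hx : ∀ t, x t = β (σ₁ t) (σ₂ t))
    (hgeo_s : ∀ t, ⟪deriv (deriv x) t, deriv (fun u => β u (σ₂ t)) (σ₁ t)⟫ = 0)
    (hgeo_ψ : ∀ t, ⟪deriv (deriv x) t, deriv (fun v => β (σ₁ t) v) (σ₂ t)⟫ = 0) :
    ∃ c : ℝ, ∀ t, ⟪deriv x t, deriv (fun u => β u (σ₂ t)) (σ₁ t)⟫ = c := by
  have hγinf : ContDiff ℝ ((⊤ : ℕ∞) : WithTop ℕ∞) γ := hγ.of_le (by simp)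
  have hγd : ∀ s, HasDerivAt γ (T s) s := fun s => by
    rw [hT]; exact (hγinf.differentiable (by simp) s).hasDerivAt
  have hTc : ContDiff ℝ ((⊤ : ℕ∞) : WithTop ℕ∞) T := by
    rw [hT]; exact (contDiff_infty_iff_deriv.mp hγinf).2
  have hTd : ∀ s, HasDerivAt T (-γ s + k₁ 0 • N s) s := fun s => by
    have h := (hTc.differentiable (by simp) s).hasDerivAt
    rwa [hFS1 s, hk₁const s 0] at h
  have hNd : ∀ s, HasDerivAt N ((-(k₁ 0)) • T s + k₂ 0 • B s) s := fun s => by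
    have h := (hN.differentiable (by simp) s).hasDerivAt
    rwa [hFS2 s, hk₁const s 0, hk₂const s 0] at h
  have hBd : ∀ s, HasDerivAt B ((-(k₂ 0)) • N s) s := fun s => by
    have h := (hB.differentiable (by simp) s).hasDerivAt
    rwa [hFS3 s, hk₂const s 0] at h
  have hγγ : ∀ s, ⟪γ s, γ s⟫ = 1 := fun s => by
    rw [real_inner_self_eq_norm_mul_norm, hsphere s]; norm_num
  obtain ⟨ha1, ha2⟩ := derivs_of_contDiff' (fun ψ => Real.cos (r ψ))
    (Real.contDiff_cos.comp (hr.of_le (by simp)))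
  obtain ⟨hb1, hb2⟩ := derivs_of_contDiff' (fun ψ => Real.sin (r ψ) * Real.cos (φ ψ))
    ((Real.contDiff_sin.comp (hr.of_le (by simp))).mul (Real.contDiff_cos.comp (hφ.of_le (by simp))))
  obtain ⟨hc1, hc2⟩ := derivs_of_contDiff' (fun ψ => Real.sin (r ψ) * Real.sin (φ ψ))
    ((Real.contDiff_sin.comp (hr.of_le (by simp))).mul (Real.contDiff_sin.comp (hφ.of_le (by simp))))
  obtain ⟨hs1, hs1'⟩ := derivs_of_contDiff' σ₁ (hσ₁.of_le (by simp))
  obtain ⟨hs2, hs2'⟩ := derivs_of_contDiff' σ₂ (hσ₂.of_le (by simp))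
  exact tube_aux γ T N B (k₁ 0) (k₂ 0) hγd hTd hNd hBd hγγ hTT hNN hBB hγT hγN hγB hTN hTB hNB
    (fun ψ => Real.cos (r ψ)) (fun ψ => Real.sin (r ψ) * Real.cos (φ ψ))
    (fun ψ => Real.sin (r ψ) * Real.sin (φ ψ)) σ₁ σ₂
    ha1 ha2 hb1 hb2 hc1 hc2 hs1 hs1' hs2 hs2' β hβ x hx hgeo_s
end

section
/- The curve γ is a unit-speed curve on S³ (i.e. ‖γ(s)‖ = 1 and ‖γ'(s)‖ = 1 for all s), and its first curvature scalar (geodesic curvature) with respect to S³ is constant: for all s, ‖γ''(s) + γ(s)‖ = |α² − β²| sin η₀ cos η₀ / p². (Here γ''(s) + γ(s) is the covariant derivative DT/ds on S³ of the unit tangent T = γ', since DT/ds = T' − ⟨T',γ⟩γ = γ'' + γ.) -/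
/-!
γ is the product of two circles, of radii `sin η₀` and `cos η₀`, run at angular speeds
`α / p` and `β / p`. Differentiating such a curve turns each circle a quarter turn ahead and
multiplies its radius by its angular speed, so `‖γ'‖² = sin² η₀ (α / p)² + cos² η₀ (β / p)² = 1`,
while `γ'' + γ` is again a product of circles, with radii `sin η₀ (1 - (α / p)²)` and
`cos η₀ (1 - (β / p)²)`; the definition of `p` turns these into
`(α² - β²) sin η₀ cos² η₀ / p²` and `(α² - β²) sin² η₀ cos η₀ / p²` up to sign.
-/

open Real

theorem hasDerivAt_toLp {𝕜 ι : Type*} [NontriviallyNormedField 𝕜] [Fintype ι] {E : ι → Type*}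
    [∀ i, NormedAddCommGroup (E i)] [∀ i, NormedSpace 𝕜 (E i)] (p : ENNReal) [Fact (1 ≤ p)]
    {f : 𝕜 → ∀ i, E i} {f' : ∀ i, E i} {t : 𝕜} (h : ∀ i, HasDerivAt (fun s => f s i) (f' i) t) :
    HasDerivAt (fun s => WithLp.toLp p (f s)) (WithLp.toLp p f') t :=
  (PiLp.hasFDerivAt_toLp p (f t)).comp_hasDerivAt t (hasDerivAt_pi.2 h)

noncomputable def torusCurve (r₁ r₂ a b φ ψ t : ℝ) : EuclideanSpace ℝ (Fin 4) :=
  !₂[r₁ * cos (a * t + φ), r₁ * sin (a * t + φ), r₂ * cos (b * t + ψ), r₂ * sin (b * t + ψ)]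

namespace torusCurve

variable (r₁ r₂ a b φ ψ : ℝ)

theorem norm_eq (t : ℝ) : ‖torusCurve r₁ r₂ a b φ ψ t‖ = √(r₁ ^ 2 + r₂ ^ 2) := by
  rw [EuclideanSpace.norm_eq, Fin.sum_univ_four]
  congr 1
  simp only [torusCurve, PiLp.toLp_apply, Matrix.cons_val, norm_eq_abs, sq_abs]
  linear_combination
    r₁ ^ 2 * cos_sq_add_sin_sq (a * t + φ) + r₂ ^ 2 * cos_sq_add_sin_sq (b * t + ψ)

theorem hasDerivAt (t : ℝ) :
    HasDerivAt (torusCurve r₁ r₂ a b φ ψ)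
      (torusCurve (r₁ * a) (r₂ * b) a b (φ + π / 2) (ψ + π / 2) t) t := by
  have hA : HasDerivAt (fun t => a * t + φ) a t := by
    simpa using ((hasDerivAt_id t).const_mul a).add_const φ
  have hB : HasDerivAt (fun t => b * t + ψ) b t := by
    simpa using ((hasDerivAt_id t).const_mul b).add_const ψ
  refine hasDerivAt_toLp 2 fun i => ?_
  fin_cases i
  · exact (hA.cos.const_mul r₁).congr_deriv (by simp [← add_assoc, cos_add_pi_div_two]; ring)
  · exact (hA.sin.const_mul r₁).congr_deriv (by simp [← add_assoc, sin_add_pi_div_two]; ring)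
  · exact (hB.cos.const_mul r₂).congr_deriv (by simp [← add_assoc, cos_add_pi_div_two]; ring)
  · exact (hB.sin.const_mul r₂).congr_deriv (by simp [← add_assoc, sin_add_pi_div_two]; ring)

theorem deriv_eq : deriv (torusCurve r₁ r₂ a b φ ψ) =
    torusCurve (r₁ * a) (r₂ * b) a b (φ + π / 2) (ψ + π / 2) :=
  funext fun t => (hasDerivAt r₁ r₂ a b φ ψ t).deriv

theorem add_pi : torusCurve r₁ r₂ a b (φ + π) (ψ + π) = -torusCurve r₁ r₂ a b φ ψ := by
  ext t i
  fin_cases i <;> simp [torusCurve, ← add_assoc, cos_add_pi, sin_add_pi]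

theorem deriv_deriv_add (t : ℝ) :
    deriv (deriv (torusCurve r₁ r₂ a b φ ψ)) t + torusCurve r₁ r₂ a b φ ψ t =
      torusCurve (r₁ * (1 - a ^ 2)) (r₂ * (1 - b ^ 2)) a b φ ψ t := by
  rw [deriv_eq, deriv_eq, add_assoc φ, add_halves, add_assoc ψ, add_halves, add_pi]
  ext i
  fin_cases i <;> simp [torusCurve] <;> ring

end torusCurve

theorem sq_mul_add_sq_mul_pos {α β x y : ℝ} (hx : 0 < x) (hy : 0 < y)
    (hαβ : ¬(α = 0 ∧ β = 0)) : 0 < α ^ 2 * x + β ^ 2 * y := by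
  rcases not_and_or.1 hαβ with hα | hβ
  · have := sq_pos_of_ne_zero hα; positivity
  · have := sq_pos_of_ne_zero hβ; positivity

/-- The curve `γ(s) = (sin η₀ cos(αs/p), sin η₀ sin(αs/p), cos η₀ cos(βs/p), cos η₀ sin(βs/p))`
(a curve on the Clifford torus in `S³` in Hopf coordinates, with
`p = √(α² sin²η₀ + β² cos²η₀)`) is a unit-speed curve on `S³` with constant geodesic
curvature `‖γ'' + γ‖ = |α² − β²| sin η₀ cos η₀ / p²` with respect to `S³`. -/
theorem hopf_curve_unit_speed_and_constant_curvature
    (η₀ α β : ℝ) (hη₀ : η₀ ∈ Set.Ioo 0 (Real.pi / 2)) (hαβ : ¬(α = 0 ∧ β = 0))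
    (p : ℝ) (hp : p = Real.sqrt (α ^ 2 * Real.sin η₀ ^ 2 + β ^ 2 * Real.cos η₀ ^ 2))
    (γ : ℝ → EuclideanSpace ℝ (Fin 4))
    (hγ : ∀ s, γ s = ![Real.sin η₀ * Real.cos (α * s / p), Real.sin η₀ * Real.sin (α * s / p),
        Real.cos η₀ * Real.cos (β * s / p), Real.cos η₀ * Real.sin (β * s / p)]) :
    (∀ s, ‖γ s‖ = 1) ∧ (∀ s, ‖deriv γ s‖ = 1) ∧
      (∀ s, ‖deriv (deriv γ) s + γ s‖
        = |α ^ 2 - β ^ 2| * Real.sin η₀ * Real.cos η₀ / p ^ 2) := by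
  obtain ⟨hη_pos, hη_lt⟩ := hη₀
  have hsin : 0 < sin η₀ := sin_pos_of_pos_of_lt_pi hη_pos (by linarith [pi_pos])
  have hcos : 0 < cos η₀ := cos_pos_of_mem_Ioo ⟨by linarith, hη_lt⟩
  have hp_pos : 0 < p := hp ▸ sqrt_pos.2 (sq_mul_add_sq_mul_pos (by positivity) (by positivity) hαβ)
  have hp_sq : p ^ 2 = α ^ 2 * sin η₀ ^ 2 + β ^ 2 * cos η₀ ^ 2 := by
    rw [hp, sq_sqrt (by positivity)]
  have h_one := sin_sq_add_cos_sq η₀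
  have hγ_eq : γ = torusCurve (sin η₀) (cos η₀) (α / p) (β / p) 0 0 := by
    funext s
    ext i
    fin_cases i <;> simp [hγ, torusCurve, mul_div_right_comm]
  subst hγ_eq
  refine ⟨fun s => ?_, fun s => ?_, fun s => ?_⟩
  · rw [torusCurve.norm_eq, h_one, sqrt_one]
  · rw [torusCurve.deriv_eq, torusCurve.norm_eq, ← sqrt_one]
    congr 1
    field_simp
    linear_combination -hp_sq
  · rw [torusCurve.deriv_deriv_add, torusCurve.norm_eq,
      ← sqrt_sq (by positivity : 0 ≤ |α ^ 2 - β ^ 2| * sin η₀ * cos η₀ / p ^ 2)]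
    congr 1
    field_simp
    have hα_gap : p ^ 2 - α ^ 2 = (β ^ 2 - α ^ 2) * cos η₀ ^ 2 := by
      linear_combination hp_sq + α ^ 2 * h_one
    have hβ_gap : p ^ 2 - β ^ 2 = (α ^ 2 - β ^ 2) * sin η₀ ^ 2 := by
      linear_combination hp_sq + β ^ 2 * h_one
    rw [hα_gap, hβ_gap, sq_abs]
    linear_combination (α ^ 2 - β ^ 2) ^ 2 * sin η₀ ^ 2 * cos η₀ ^ 2 * h_one
end

section
/- The curve γ lies on M, has constant speed ‖γ'(t)‖ = p, and its first curvature scalar (geodesic curvature) with respect to the submanifold M is constant: for all t, (1/p) ‖T'(t) − ⟨T'(t), n(γ(t))⟩ n(γ(t))‖ = |b²β² − a²α²| sin η₀ cos η₀ / (p² q), where T(t) = γ'(t)/p is the unit tangent. (The left-hand side is the norm of the covariant derivative DT/ds on M with respect to arclength, obtained by projecting the ambient derivative onto the tangent space of M.) -/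
open Real
open scoped RealInnerProductSpace

/-!
Identify ℝ⁴ with ℂ². The curve is `t ↦ (A e^{iαt}, B e^{iβt})` with `A = a sin η₀`, `B = b cos η₀`,
and along it every vector of interest (position, velocity, acceleration, the normal of the
ellipsoid) has the form `(x e^{iθ}, y e^{iφ})` with the common angles `θ = αt`, `φ = βt`
(velocity up to a quarter turn). Inner products of such vectors only see the radii `(x, y)`, so the whole
computation happens in ℝ²: removing from `(u, v)` its component along the unit vector `(m, k)`
leaves a vector of length `|u k - v m|`.
-/

noncomputable def torusPoint (x y θ φ : ℝ) : EuclideanSpace ℝ (Fin 4) :=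
  !₂[x * cos θ, x * sin θ, y * cos φ, y * sin φ]

section torusPoint

variable (x y θ φ : ℝ)

@[simp] lemma torusPoint_apply_zero : torusPoint x y θ φ 0 = x * cos θ := rfl
@[simp] lemma torusPoint_apply_one : torusPoint x y θ φ 1 = x * sin θ := rfl
@[simp] lemma torusPoint_apply_two : torusPoint x y θ φ 2 = y * cos φ := rfl
@[simp] lemma torusPoint_apply_three : torusPoint x y θ φ 3 = y * sin φ := rfl

lemma smul_torusPoint (c : ℝ) : c • torusPoint x y θ φ = torusPoint (c * x) (c * y) θ φ := by
  ext i; fin_cases i <;> simp [torusPoint, mul_assoc]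

lemma torusPoint_sub_torusPoint (x' y' : ℝ) :
    torusPoint x y θ φ - torusPoint x' y' θ φ = torusPoint (x - x') (y - y') θ φ := by
  ext i; fin_cases i <;> simp [torusPoint, sub_mul]

lemma torusPoint_add_pi : torusPoint x y (θ + π) (φ + π) = torusPoint (-x) (-y) θ φ := by
  ext i; fin_cases i <;> simp [torusPoint]

lemma inner_torusPoint (x' y' : ℝ) :
    ⟪torusPoint x y θ φ, torusPoint x' y' θ φ⟫ = x * x' + y * y' := by
  simp only [torusPoint, EuclideanSpace.inner_toLp_toLp, dotProduct, Fin.sum_univ_four,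
    Fin.isValue, Matrix.cons_val, Matrix.cons_val_zero, Matrix.cons_val_one, star_trivial]
  linear_combination (x * x') * sin_sq_add_cos_sq θ + (y * y') * sin_sq_add_cos_sq φ

lemma norm_torusPoint : ‖torusPoint x y θ φ‖ = √(x ^ 2 + y ^ 2) := by
  rw [norm_eq_sqrt_re_inner (𝕜 := ℝ), RCLike.re_to_real, inner_torusPoint]
  ring_nf

lemma torusPoint_sq_add_sq_fst : torusPoint x y θ φ 0 ^ 2 + torusPoint x y θ φ 1 ^ 2 = x ^ 2 := by
  simp only [torusPoint_apply_zero, torusPoint_apply_one]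
  linear_combination x ^ 2 * cos_sq_add_sin_sq θ

lemma torusPoint_sq_add_sq_snd : torusPoint x y θ φ 2 ^ 2 + torusPoint x y θ φ 3 ^ 2 = y ^ 2 := by
  simp only [torusPoint_apply_two, torusPoint_apply_three]
  linear_combination y ^ 2 * cos_sq_add_sin_sq φ

end torusPoint

lemma HasDerivAt.torusPoint {θ φ : ℝ → ℝ} {θ' φ' t : ℝ} (x y : ℝ) (hθ : HasDerivAt θ θ' t)
    (hφ : HasDerivAt φ φ' t) :
    HasDerivAt (fun t ↦ torusPoint x y (θ t) (φ t))
      (torusPoint (x * θ') (y * φ') (θ t + π / 2) (φ t + π / 2)) t := by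
  have h : HasDerivAt
      (fun t ↦ ![x * Real.cos (θ t), x * Real.sin (θ t), y * Real.cos (φ t), y * Real.sin (φ t)])
      ![x * θ' * Real.cos (θ t + π / 2), x * θ' * Real.sin (θ t + π / 2),
        y * φ' * Real.cos (φ t + π / 2), y * φ' * Real.sin (φ t + π / 2)] t := by
    rw [hasDerivAt_pi]
    intro i
    fin_cases i <;> simp only [Fin.zero_eta, Fin.mk_one, Fin.reduceFinMk, Fin.isValue,
      Matrix.cons_val, Matrix.cons_val_zero, Matrix.cons_val_one, cos_add_pi_div_two,
      sin_add_pi_div_two, mul_neg]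
    · exact (hθ.cos.const_mul x).congr_deriv (by ring)
    · exact (hθ.sin.const_mul x).congr_deriv (by ring)
    · exact (hφ.cos.const_mul y).congr_deriv (by ring)
    · exact (hφ.sin.const_mul y).congr_deriv (by ring)
  exact (PiLp.hasFDerivAt_toLp 2 _).comp_hasDerivAt t h

lemma hasDerivAt_torusPoint_mul (x y α β t : ℝ) :
    HasDerivAt (fun t ↦ torusPoint x y (α * t) (β * t))
      (torusPoint (x * α) (y * β) (α * t + π / 2) (β * t + π / 2)) t :=
  (hasDerivAt_const_mul α).torusPoint x y (hasDerivAt_const_mul β)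

lemma deriv_smul_deriv_torusPoint_mul (c x y α β t : ℝ) :
    deriv (fun t ↦ c • deriv (fun t ↦ torusPoint x y (α * t) (β * t)) t) t
      = torusPoint (-(c * x * α ^ 2)) (-(c * y * β ^ 2)) (α * t) (β * t) := by
  simp only [(hasDerivAt_torusPoint_mul _ _ _ _ _).deriv, smul_torusPoint]
  rw [(((hasDerivAt_const_mul α).add_const (π / 2)).torusPoint _ _
    ((hasDerivAt_const_mul β).add_const (π / 2))).deriv]
  simp only [add_assoc, add_halves, torusPoint_add_pi]
  congr 1 <;> ring

lemma norm_sub_inner_smul_torusPoint {m k : ℝ} (u v θ φ : ℝ) (hmk : ‖torusPoint m k θ φ‖ = 1) :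
    ‖torusPoint u v θ φ - ⟪torusPoint u v θ φ, torusPoint m k θ φ⟫ • torusPoint m k θ φ‖
      = |u * k - v * m| := by
  rw [norm_torusPoint, sqrt_eq_one] at hmk
  rw [inner_torusPoint, smul_torusPoint, torusPoint_sub_torusPoint, norm_torusPoint,
    ← sqrt_sq_eq_abs]
  congr 1
  linear_combination ((u * m + v * k) ^ 2 - u ^ 2 - v ^ 2) * hmk

lemma inv_norm_smul_torusPoint_div {a b : ℝ} (ha : 0 < a) (hb : 0 < b) (s c θ φ : ℝ) :
    ‖torusPoint (s / a) (c / b) θ φ‖⁻¹ • torusPoint (s / a) (c / b) θ φ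
      = torusPoint (b * s / √(a ^ 2 * c ^ 2 + b ^ 2 * s ^ 2))
          (a * c / √(a ^ 2 * c ^ 2 + b ^ 2 * s ^ 2)) θ φ := by
  have hnorm : ‖torusPoint (s / a) (c / b) θ φ‖ = √(a ^ 2 * c ^ 2 + b ^ 2 * s ^ 2) / (a * b) := by
    have hsq : (s / a) ^ 2 + (c / b) ^ 2 = (a ^ 2 * c ^ 2 + b ^ 2 * s ^ 2) / (a * b) ^ 2 := by
      field_simp
      ring
    rw [norm_torusPoint, hsq, sqrt_div' _ (by positivity), sqrt_sq (by positivity)]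
  rw [hnorm, smul_torusPoint]
  congr 1 <;> field_simp

def ellipsoid (a b : ℝ) : Set (EuclideanSpace ℝ (Fin 4)) :=
  {x | ((x 0) ^ 2 + (x 1) ^ 2) / a ^ 2 + ((x 2) ^ 2 + (x 3) ^ 2) / b ^ 2 = 1}

noncomputable def ellipsoidGradient (a b : ℝ) (x : EuclideanSpace ℝ (Fin 4)) :
    EuclideanSpace ℝ (Fin 4) :=
  !₂[x 0 / a ^ 2, x 1 / a ^ 2, x 2 / b ^ 2, x 3 / b ^ 2]

lemma torusPoint_mem_ellipsoid {a b s c : ℝ} (ha : a ≠ 0) (hb : b ≠ 0) (hsc : s ^ 2 + c ^ 2 = 1)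
    (θ φ : ℝ) : torusPoint (a * s) (b * c) θ φ ∈ ellipsoid a b := by
  rw [ellipsoid, Set.mem_ofPred_eq, torusPoint_sq_add_sq_fst, torusPoint_sq_add_sq_snd]
  field_simp
  linear_combination hsc

lemma ellipsoidGradient_torusPoint {a b : ℝ} (ha : a ≠ 0) (hb : b ≠ 0) (s c θ φ : ℝ) :
    ellipsoidGradient a b (torusPoint (a * s) (b * c) θ φ) = torusPoint (s / a) (c / b) θ φ := by
  ext i
  fin_cases i <;> simp only [ellipsoidGradient, torusPoint, Fin.zero_eta, Fin.mk_one,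
    Fin.reduceFinMk, Fin.isValue, Matrix.cons_val, Matrix.cons_val_zero, Matrix.cons_val_one] <;>
    field_simp

theorem ellipsoid_curve_constant_curvature_general
    (a b η₀ α β : ℝ) (ha : 0 < a) (hb : 0 < b) (hη₀ : η₀ ∈ Set.Ioo 0 (Real.pi / 2))
    (M : Set (EuclideanSpace ℝ (Fin 4)))
    (hM : M = {x : EuclideanSpace ℝ (Fin 4) |
        ((x 0) ^ 2 + (x 1) ^ 2) / a ^ 2 + ((x 2) ^ 2 + (x 3) ^ 2) / b ^ 2 = 1})
    (ν n : EuclideanSpace ℝ (Fin 4) → EuclideanSpace ℝ (Fin 4))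
    (hν : ∀ x, ν x = ![x 0 / a ^ 2, x 1 / a ^ 2, x 2 / b ^ 2, x 3 / b ^ 2])
    (hn : ∀ x, n x = ‖ν x‖⁻¹ • ν x)
    (γ : ℝ → EuclideanSpace ℝ (Fin 4))
    (hγ : ∀ t, γ t = ![a * Real.sin η₀ * Real.cos (α * t), a * Real.sin η₀ * Real.sin (α * t),
        b * Real.cos η₀ * Real.cos (β * t), b * Real.cos η₀ * Real.sin (β * t)])
    (p q : ℝ)
    (hp : p = Real.sqrt (a ^ 2 * α ^ 2 * Real.sin η₀ ^ 2 + b ^ 2 * β ^ 2 * Real.cos η₀ ^ 2))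
    (hq : q = Real.sqrt (a ^ 2 * Real.cos η₀ ^ 2 + b ^ 2 * Real.sin η₀ ^ 2))
    (T : ℝ → EuclideanSpace ℝ (Fin 4)) (hT : ∀ t, T t = p⁻¹ • deriv γ t) :
    (∀ t, γ t ∈ M) ∧ (∀ t, ‖deriv γ t‖ = p) ∧
      (∀ t, (1 / p) * ‖deriv T t - ⟪deriv T t, n (γ t)⟫ • n (γ t)‖
        = |b ^ 2 * β ^ 2 - a ^ 2 * α ^ 2| * Real.sin η₀ * Real.cos η₀ / (p ^ 2 * q)) := by
  obtain ⟨hη_pos, hη_lt⟩ := hη₀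
  have hs : 0 < sin η₀ := sin_pos_of_pos_of_lt_pi hη_pos (by linarith [pi_pos])
  have hc : 0 < cos η₀ := cos_pos_of_mem_Ioo ⟨by linarith [pi_pos], hη_lt⟩
  have hq_pos : 0 < q := hq ▸ sqrt_pos.2 (by positivity)
  have hγ_eq : γ = fun t ↦ torusPoint (a * sin η₀) (b * cos η₀) (α * t) (β * t) :=
    funext fun t ↦ WithLp.ofLp_injective 2 (hγ t)
  have hν_eq : ν = ellipsoidGradient a b := funext fun x ↦ WithLp.ofLp_injective 2 (hν x)
  have hn_eq (t : ℝ) : n (γ t) = torusPoint (b * sin η₀ / q) (a * cos η₀ / q) (α * t) (β * t) := by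
    rw [hn, hν_eq, hγ_eq, ellipsoidGradient_torusPoint ha.ne' hb.ne',
      inv_norm_smul_torusPoint_div ha hb, hq]
  have hn_unit (t : ℝ) : ‖torusPoint (b * sin η₀ / q) (a * cos η₀ / q) (α * t) (β * t)‖ = 1 := by
    rw [norm_torusPoint, sqrt_eq_one, div_pow, div_pow, ← add_div,
      div_eq_one_iff_eq (by positivity), hq, sq_sqrt (by positivity)]
    ring
  refine ⟨fun t ↦ ?_, fun t ↦ ?_, fun t ↦ ?_⟩
  · rw [hM, hγ_eq]
    exact torusPoint_mem_ellipsoid ha.ne' hb.ne' (sin_sq_add_cos_sq η₀) _ _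
  · rw [hγ_eq, (hasDerivAt_torusPoint_mul _ _ _ _ _).deriv, norm_torusPoint, hp]
    ring_nf
  · have hp_nonneg : 0 ≤ p := hp ▸ sqrt_nonneg _
    rw [hn_eq, funext hT, hγ_eq, deriv_smul_deriv_torusPoint_mul,
      norm_sub_inner_smul_torusPoint _ _ _ _ (hn_unit t),
      show -(p⁻¹ * (a * sin η₀) * α ^ 2) * (a * cos η₀ / q) - -(p⁻¹ * (b * cos η₀) * β ^ 2) *
        (b * sin η₀ / q) = p⁻¹ * (sin η₀ * cos η₀) / q * (b ^ 2 * β ^ 2 - a ^ 2 * α ^ 2) by ring,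
      abs_mul, abs_of_nonneg (div_nonneg (mul_nonneg (inv_nonneg.2 hp_nonneg) (mul_pos hs hc).le)
        hq_pos.le)]
    ring

/-- The curve `γ(t) = (a sin η₀ cos(αt), a sin η₀ sin(αt), b cos η₀ cos(βt), b cos η₀ sin(βt))`
lies on the degenerate 3-ellipsoid `M = {(x₁²+x₂²)/a² + (x₃²+x₄²)/b² = 1}` in ℝ⁴, has constant
speed `p = √(a²α² sin²η₀ + b²β² cos²η₀)`, and its geodesic curvature with respect to `M`
(the norm of the projection of `DT/ds` onto the tangent space of `M`) is the constant
`|b²β² − a²α²| sin η₀ cos η₀ / (p² q)` where `q = √(a² cos²η₀ + b² sin²η₀)`. -/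
theorem ellipsoid_curve_constant_curvature
    (a b η₀ α β : ℝ) (ha : 0 < a) (hb : 0 < b) (hη₀ : η₀ ∈ Set.Ioo 0 (Real.pi / 2))
    (hαβ : ¬(α = 0 ∧ β = 0))
    (M : Set (EuclideanSpace ℝ (Fin 4)))
    (hM : M = {x : EuclideanSpace ℝ (Fin 4) |
        ((x 0) ^ 2 + (x 1) ^ 2) / a ^ 2 + ((x 2) ^ 2 + (x 3) ^ 2) / b ^ 2 = 1})
    (ν n : EuclideanSpace ℝ (Fin 4) → EuclideanSpace ℝ (Fin 4))
    (hν : ∀ x, ν x = ![x 0 / a ^ 2, x 1 / a ^ 2, x 2 / b ^ 2, x 3 / b ^ 2])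
    (hn : ∀ x, n x = ‖ν x‖⁻¹ • ν x)
    (γ : ℝ → EuclideanSpace ℝ (Fin 4))
    (hγ : ∀ t, γ t = ![a * Real.sin η₀ * Real.cos (α * t), a * Real.sin η₀ * Real.sin (α * t),
        b * Real.cos η₀ * Real.cos (β * t), b * Real.cos η₀ * Real.sin (β * t)])
    (p q : ℝ)
    (hp : p = Real.sqrt (a ^ 2 * α ^ 2 * Real.sin η₀ ^ 2 + b ^ 2 * β ^ 2 * Real.cos η₀ ^ 2))
    (hq : q = Real.sqrt (a ^ 2 * Real.cos η₀ ^ 2 + b ^ 2 * Real.sin η₀ ^ 2))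
    (T : ℝ → EuclideanSpace ℝ (Fin 4)) (hT : ∀ t, T t = p⁻¹ • deriv γ t) :
    (∀ t, γ t ∈ M) ∧ (∀ t, ‖deriv γ t‖ = p) ∧
      (∀ t, (1 / p) * ‖deriv T t - ⟪deriv T t, n (γ t)⟫ • n (γ t)‖
        = |b ^ 2 * β ^ 2 - a ^ 2 * α ^ 2| * Real.sin η₀ * Real.cos η₀ / (p ^ 2 * q)) :=
  ellipsoid_curve_constant_curvature_general a b η₀ α β ha hb hη₀ M hM ν n hν hn γ hγ p q hp hq T hT
end

section
/- Assume in addition that (b²β² − a²α²) sin η₀ cos η₀ ≠ 0, set k₁ = (b²β² − a²α²) sin η₀ cos η₀ / (p² q), T(t) = γ'(t)/p, and define the unit normal of γ in M by N(t) = (T'(t) − ⟨T'(t), n(γ(t))⟩ n(γ(t))) / (p k₁). Then the second curvature scalar (torsion) of γ with respect to M is constant: for all t, ‖(1/p)(N'(t) − ⟨N'(t), n(γ(t))⟩ n(γ(t))) + k₁ T(t)‖ = a b |α β| / (p² q). (The covariant derivative DN/ds on M with respect to arclength is (1/p)(N' − ⟨N', n⟩n), and k₂ = ‖DN/ds + k₁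 T‖.) -/
/-!
Write `s = sin η₀`, `c = cos η₀`. In complex coordinates `ℝ⁴ ≅ ℂ²` the curve is
`γ(t) = (a s e^{iαt}, b c e^{iβt})`, and every field met along the way (`γ`, `T`, `T'`, `n ∘ γ`,
`N`, `N'`) is `(x e^{iαt}, y e^{iβt})` or `i` times it, with constant real amplitudes `(x, y)`.
Differentiation multiplies the amplitudes by `(α, β)` (up to sign) and swaps the two families,
inner products and norms only see the amplitudes, and the two families are orthogonal. So the
Frenet computation is algebra on amplitude pairs: `n ∘ γ` has amplitudes `(b s, a c)/q`, so `T'`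
minus its normal part is `p k₁` times the unit vector `N = (a c, -b s)/q`; `N'` is tangent to `M`,
and `N'/p + k₁ T` has amplitudes `(a α c b²β², -b β s a²α²)/(p³q)`, of length `ab|αβ|/(p²q)`
because `p² = a²α²s² + b²β²c²`.
-/
open Real
open scoped RealInnerProductSpace

noncomputable section

/-- `(x e^{iαu}, y e^{iβu})` under `ℝ⁴ ≅ ℂ²`. -/
def torusVec (α β x y u : ℝ) : EuclideanSpace ℝ (Fin 4) :=
  WithLp.toLp 2 ![x * cos (α * u), x * sin (α * u), y * cos (β * u), y * sin (β * u)]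

/-- `i • torusVec α β x y u` under `ℝ⁴ ≅ ℂ²`. -/
def torusVecPerp (α β x y u : ℝ) : EuclideanSpace ℝ (Fin 4) :=
  WithLp.toLp 2 ![-(x * sin (α * u)), x * cos (α * u), -(y * sin (β * u)), y * cos (β * u)]
end

theorem hasDerivAt_mul_cos_mul (x α u : ℝ) :
    HasDerivAt (fun u => x * cos (α * u)) (-(α * x * sin (α * u))) u :=
  ((((hasDerivAt_id u).const_mul α).cos).const_mul x).congr_deriv (by simp; ring)

theorem hasDerivAt_mul_sin_mul (x α u : ℝ) :
    HasDerivAt (fun u => x * sin (α * u)) (α * x * cos (α * u)) u :=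
  ((((hasDerivAt_id u).const_mul α).sin).const_mul x).congr_deriv (by simp; ring)

theorem hasDerivAt_toLp_of_forall {ι : Type*} [Fintype ι] {p : ENNReal} [Fact (1 ≤ p)]
    {f : ℝ → ι → ℝ} {f' : ι → ℝ} {u : ℝ} (h : ∀ i, HasDerivAt (fun t => f t i) (f' i) u) :
    HasDerivAt (fun t => WithLp.toLp p (f t)) (WithLp.toLp p f') u :=
  (PiLp.hasFDerivAt_toLp p (f u)).comp_hasDerivAt u (hasDerivAt_pi.2 h)

section
variable (α β : ℝ)

theorem hasDerivAt_torusVec (x y u : ℝ) :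
    HasDerivAt (torusVec α β x y) (torusVecPerp α β (α * x) (β * y) u) u := by
  refine hasDerivAt_toLp_of_forall fun i => ?_
  fin_cases i
  exacts [hasDerivAt_mul_cos_mul x α u, hasDerivAt_mul_sin_mul x α u,
    hasDerivAt_mul_cos_mul y β u, hasDerivAt_mul_sin_mul y β u]

theorem hasDerivAt_torusVecPerp (x y u : ℝ) :
    HasDerivAt (torusVecPerp α β x y) (torusVec α β (-(α * x)) (-(β * y)) u) u := by
  refine hasDerivAt_toLp_of_forall fun i => ?_
  fin_cases i
  · exact (hasDerivAt_mul_sin_mul x α u).neg.congr_deriv (by simp)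
  · exact (hasDerivAt_mul_cos_mul x α u).congr_deriv (by simp)
  · exact (hasDerivAt_mul_sin_mul y β u).neg.congr_deriv (by simp)
  · exact (hasDerivAt_mul_cos_mul y β u).congr_deriv (by simp)

theorem inner_torusVec (x y x' y' u : ℝ) :
    ⟪torusVec α β x y u, torusVec α β x' y' u⟫ = x * x' + y * y' := by
  have h₁ := sin_sq_add_cos_sq (α * u)
  have h₂ := sin_sq_add_cos_sq (β * u)
  simp [torusVec, PiLp.inner_apply, Fin.sum_univ_four]
  linear_combination (x * x') * h₁ + (y * y') * h₂

theorem inner_torusVecPerp (x y x' y' u : ℝ) :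
    ⟪torusVecPerp α β x y u, torusVecPerp α β x' y' u⟫ = x * x' + y * y' := by
  have h₁ := sin_sq_add_cos_sq (α * u)
  have h₂ := sin_sq_add_cos_sq (β * u)
  simp [torusVecPerp, PiLp.inner_apply, Fin.sum_univ_four]
  linear_combination (x * x') * h₁ + (y * y') * h₂

theorem inner_torusVecPerp_torusVec (x y x' y' u : ℝ) :
    ⟪torusVecPerp α β x y u, torusVec α β x' y' u⟫ = 0 := by
  simp [torusVecPerp, torusVec, PiLp.inner_apply, Fin.sum_univ_four]
  ring

theorem norm_torusVec (x y u : ℝ) : ‖torusVec α β x y u‖ = √(x ^ 2 + y ^ 2) := by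
  rw [norm_eq_sqrt_real_inner, inner_torusVec]; ring_nf

theorem norm_torusVecPerp (x y u : ℝ) : ‖torusVecPerp α β x y u‖ = √(x ^ 2 + y ^ 2) := by
  rw [norm_eq_sqrt_real_inner, inner_torusVecPerp]; ring_nf

theorem smul_torusVec (r x y u : ℝ) : r • torusVec α β x y u = torusVec α β (r * x) (r * y) u := by
  ext i; fin_cases i <;> simp [torusVec] <;> ring

theorem smul_torusVecPerp (r x y u : ℝ) :
    r • torusVecPerp α β x y u = torusVecPerp α β (r * x) (r * y) u := by
  ext i; fin_cases i <;> simp [torusVecPerp] <;> ring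

theorem torusVec_sub (x y x' y' u : ℝ) :
    torusVec α β x y u - torusVec α β x' y' u = torusVec α β (x - x') (y - y') u := by
  ext i; fin_cases i <;> simp [torusVec] <;> ring

theorem torusVecPerp_add (x y x' y' u : ℝ) :
    torusVecPerp α β x y u + torusVecPerp α β x' y' u = torusVecPerp α β (x + x') (y + y') u := by
  ext i; fin_cases i <;> simp [torusVecPerp] <;> ring

theorem torusVec_sub_inner_smul_unit {e₁ e₂ : ℝ} (he : e₁ ^ 2 + e₂ ^ 2 = 1) (x y u : ℝ) :
    torusVec α β x y u - ⟪torusVec α β x y u, torusVec α β e₁ e₂ u⟫ • torusVec α β e₁ e₂ u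
      = (x * e₂ - y * e₁) • torusVec α β e₂ (-e₁) u := by
  rw [inner_torusVec, smul_torusVec, smul_torusVec, torusVec_sub]
  congr 1
  · linear_combination (-x) * he
  · linear_combination (-y) * he

theorem ellipsoid_unitNormal_torusVec {a b : ℝ} (ha : 0 < a) (hb : 0 < b)
    {ν n : EuclideanSpace ℝ (Fin 4) → EuclideanSpace ℝ (Fin 4)}
    (hν : ∀ x, ν x = ![x 0 / a ^ 2, x 1 / a ^ 2, x 2 / b ^ 2, x 3 / b ^ 2])
    (hn : ∀ x, n x = ‖ν x‖⁻¹ • ν x) (s c u : ℝ) :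
    n (torusVec α β (a * s) (b * c) u)
      = torusVec α β (b * s / √(a ^ 2 * c ^ 2 + b ^ 2 * s ^ 2))
          (a * c / √(a ^ 2 * c ^ 2 + b ^ 2 * s ^ 2)) u := by
  have hνE : ν (torusVec α β (a * s) (b * c) u) = torusVec α β (s / a) (c / b) u := by
    refine WithLp.ofLp_injective 2 ((hν _).trans ?_)
    ext i; fin_cases i <;> simp [torusVec] <;> field_simp
  have hnorm : ‖torusVec α β (s / a) (c / b) u‖ = √(a ^ 2 * c ^ 2 + b ^ 2 * s ^ 2) / (a * b) := by
    rw [norm_torusVec, eq_div_iff (by positivity), ← sqrt_sq (by positivity : 0 ≤ a * b),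
      ← sqrt_mul (by positivity)]
    congr 1
    field_simp
    ring
  rw [hn, hνE, hnorm, smul_torusVec]
  congr 1 <;> field_simp
end

theorem torsion_amplitude_sq_add_sq {a b s c α β p q k : ℝ} (hsc : s ^ 2 + c ^ 2 = 1)
    (hp : p ^ 2 = a ^ 2 * α ^ 2 * s ^ 2 + b ^ 2 * β ^ 2 * c ^ 2) (hp0 : p ≠ 0) (hq0 : q ≠ 0)
    (hk : k = (b ^ 2 * β ^ 2 - a ^ 2 * α ^ 2) * s * c / (p ^ 2 * q)) :
    (1 / p * (α * (a * c / q)) + k * (p⁻¹ * (α * (a * s)))) ^ 2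
        + (1 / p * (β * -(b * s / q)) + k * (p⁻¹ * (β * (b * c)))) ^ 2
      = (a * b * (α * β) / (p ^ 2 * q)) ^ 2 := by
  have hx : 1 / p * (α * (a * c / q)) + k * (p⁻¹ * (α * (a * s)))
      = a * α * c * (b ^ 2 * β ^ 2) / (p ^ 3 * q) := by
    rw [hk]; field_simp; linear_combination (α * a * c) * hp + (α * a * c * b ^ 2 * β ^ 2) * hsc
  have hy : 1 / p * (β * -(b * s / q)) + k * (p⁻¹ * (β * (b * c)))
      = -(b * β * s * (a ^ 2 * α ^ 2)) / (p ^ 3 * q) := by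
    rw [hk]; field_simp; linear_combination (-(β * b * s)) * hp - (β * b * s * a ^ 2 * α ^ 2) * hsc
  rw [hx, hy]
  field_simp
  linear_combination (-(a ^ 2 * α ^ 2 * b ^ 2 * β ^ 2)) * hp

theorem sq_mul_add_sq_mul_pos_of_ne_zero {a b s c α β : ℝ}
    (h : (b ^ 2 * β ^ 2 - a ^ 2 * α ^ 2) * s * c ≠ 0) :
    0 < a ^ 2 * α ^ 2 * s ^ 2 + b ^ 2 * β ^ 2 * c ^ 2 := by
  refine lt_of_not_ge fun hle => h ?_
  have h₁ : a * α * s = 0 :=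
    pow_eq_zero_iff two_ne_zero |>.1 (by nlinarith [sq_nonneg (a * α * s), sq_nonneg (b * β * c)])
  have h₂ : b * β * c = 0 :=
    pow_eq_zero_iff two_ne_zero |>.1 (by nlinarith [sq_nonneg (a * α * s), sq_nonneg (b * β * c)])
  linear_combination (b * β * s) * h₂ - (a * α * c) * h₁

theorem ellipsoid_curve_constant_torsion_general
    (a b η₀ α β : ℝ) (ha : 0 < a) (hb : 0 < b)
    (ν n : EuclideanSpace ℝ (Fin 4) → EuclideanSpace ℝ (Fin 4))
    (hν : ∀ x, ν x = ![x 0 / a ^ 2, x 1 / a ^ 2, x 2 / b ^ 2, x 3 / b ^ 2])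
    (hn : ∀ x, n x = ‖ν x‖⁻¹ • ν x)
    (γ : ℝ → EuclideanSpace ℝ (Fin 4))
    (hγ : ∀ t, γ t = ![a * Real.sin η₀ * Real.cos (α * t), a * Real.sin η₀ * Real.sin (α * t),
        b * Real.cos η₀ * Real.cos (β * t), b * Real.cos η₀ * Real.sin (β * t)])
    (p q : ℝ)
    (hp : p = Real.sqrt (a ^ 2 * α ^ 2 * Real.sin η₀ ^ 2 + b ^ 2 * β ^ 2 * Real.cos η₀ ^ 2))
    (hq : q = Real.sqrt (a ^ 2 * Real.cos η₀ ^ 2 + b ^ 2 * Real.sin η₀ ^ 2))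
    (hne : (b ^ 2 * β ^ 2 - a ^ 2 * α ^ 2) * Real.sin η₀ * Real.cos η₀ ≠ 0)
    (k₁ : ℝ) (hk₁ : k₁ = (b ^ 2 * β ^ 2 - a ^ 2 * α ^ 2) * Real.sin η₀ * Real.cos η₀ / (p ^ 2 * q))
    (T : ℝ → EuclideanSpace ℝ (Fin 4)) (hT : ∀ t, T t = p⁻¹ • deriv γ t)
    (N : ℝ → EuclideanSpace ℝ (Fin 4))
    (hN : ∀ t, N t = (p * k₁)⁻¹ • (deriv T t - ⟪deriv T t, n (γ t)⟫ • n (γ t))) :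
    ∀ t, ‖(1 / p) • (deriv N t - ⟪deriv N t, n (γ t)⟫ • n (γ t)) + k₁ • T t‖
        = a * b * |α * β| / (p ^ 2 * q) := by
  set s := sin η₀
  set c := cos η₀
  have hc : c ≠ 0 := right_ne_zero_of_mul hne
  have hp2 : p ^ 2 = a ^ 2 * α ^ 2 * s ^ 2 + b ^ 2 * β ^ 2 * c ^ 2 := by
    rw [hp, sq_sqrt (by positivity)]
  have hq2 : q ^ 2 = a ^ 2 * c ^ 2 + b ^ 2 * s ^ 2 := by rw [hq, sq_sqrt (by positivity)]
  have hq0 : 0 < q := by rw [hq]; exact sqrt_pos.2 (by positivity)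
  have hp0 : 0 < p := by rw [hp]; exact sqrt_pos.2 (sq_mul_add_sq_mul_pos_of_ne_zero hne)
  have hpk : p * k₁ ≠ 0 := by rw [hk₁]; exact mul_ne_zero hp0.ne' (div_ne_zero hne (by positivity))
  have hγ' : γ = torusVec α β (a * s) (b * c) := funext fun t => WithLp.ofLp_injective 2 (hγ t)
  have hnγ : ∀ u, n (γ u) = torusVec α β (b * s / q) (a * c / q) u := by
    intro u; rw [hγ', ellipsoid_unitNormal_torusVec α β ha hb hν hn, hq]
  have hT' : T = torusVecPerp α β (p⁻¹ * (α * (a * s))) (p⁻¹ * (β * (b * c))) := funext fun u => by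
    rw [hT, hγ', (hasDerivAt_torusVec α β _ _ u).deriv, smul_torusVecPerp]
  have hN' : N = torusVec α β (a * c / q) (-(b * s / q)) := funext fun u => by
    have hunit : (b * s / q) ^ 2 + (a * c / q) ^ 2 = 1 := by
      field_simp; linear_combination -hq2
    have hgeod : -(α * (p⁻¹ * (α * (a * s)))) * (a * c / q)
        - -(β * (p⁻¹ * (β * (b * c)))) * (b * s / q) = p * k₁ := by
      rw [hk₁]; field_simp; ring
    rw [hN, hT', (hasDerivAt_torusVecPerp α β _ _ u).deriv, hnγ,
      torusVec_sub_inner_smul_unit α β hunit, hgeod, smul_smul, inv_mul_cancel₀ hpk, one_smul]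
  intro t
  rw [hN', (hasDerivAt_torusVec α β _ _ t).deriv, hnγ, inner_torusVecPerp_torusVec, zero_smul,
    sub_zero, hT', smul_torusVecPerp, smul_torusVecPerp, torusVecPerp_add, norm_torusVecPerp,
    torsion_amplitude_sq_add_sq (sin_sq_add_cos_sq η₀) hp2 hp0.ne' hq0.ne' hk₁, sqrt_sq_eq_abs]
  simp [abs_div, abs_mul, abs_of_pos, ha, hb, hp0, hq0]

/-- For the curve `γ` on the degenerate 3-ellipsoid `M` in ℝ⁴, with constant geodesic
curvature `k₁ = (b²β² − a²α²) sin η₀ cos η₀ / (p² q) ≠ 0` and unit normal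
`N = (T' − ⟨T', n∘γ⟩ n∘γ)/(p k₁)` in `M`, the torsion of `γ` with respect to `M` is the
constant `ab|αβ| / (p² q)`: for all `t`,
`‖(1/p)(N' − ⟨N', n(γ)⟩ n(γ)) + k₁ T‖ = ab|αβ|/(p²q)`. -/
theorem ellipsoid_curve_constant_torsion
    (a b η₀ α β : ℝ) (ha : 0 < a) (hb : 0 < b) (hη₀ : η₀ ∈ Set.Ioo 0 (Real.pi / 2))
    (hαβ : ¬(α = 0 ∧ β = 0))
    (M : Set (EuclideanSpace ℝ (Fin 4)))
    (hM : M = {x : EuclideanSpace ℝ (Fin 4) |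
        ((x 0) ^ 2 + (x 1) ^ 2) / a ^ 2 + ((x 2) ^ 2 + (x 3) ^ 2) / b ^ 2 = 1})
    (ν n : EuclideanSpace ℝ (Fin 4) → EuclideanSpace ℝ (Fin 4))
    (hν : ∀ x, ν x = ![x 0 / a ^ 2, x 1 / a ^ 2, x 2 / b ^ 2, x 3 / b ^ 2])
    (hn : ∀ x, n x = ‖ν x‖⁻¹ • ν x)
    (γ : ℝ → EuclideanSpace ℝ (Fin 4))
    (hγ : ∀ t, γ t = ![a * Real.sin η₀ * Real.cos (α * t), a * Real.sin η₀ * Real.sin (α * t),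
        b * Real.cos η₀ * Real.cos (β * t), b * Real.cos η₀ * Real.sin (β * t)])
    (p q : ℝ)
    (hp : p = Real.sqrt (a ^ 2 * α ^ 2 * Real.sin η₀ ^ 2 + b ^ 2 * β ^ 2 * Real.cos η₀ ^ 2))
    (hq : q = Real.sqrt (a ^ 2 * Real.cos η₀ ^ 2 + b ^ 2 * Real.sin η₀ ^ 2))
    (hne : (b ^ 2 * β ^ 2 - a ^ 2 * α ^ 2) * Real.sin η₀ * Real.cos η₀ ≠ 0)
    (k₁ : ℝ) (hk₁ : k₁ = (b ^ 2 * β ^ 2 - a ^ 2 * α ^ 2) * Real.sin η₀ * Real.cos η₀ / (p ^ 2 * q))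
    (T : ℝ → EuclideanSpace ℝ (Fin 4)) (hT : ∀ t, T t = p⁻¹ • deriv γ t)
    (N : ℝ → EuclideanSpace ℝ (Fin 4))
    (hN : ∀ t, N t = (p * k₁)⁻¹ • (deriv T t - ⟪deriv T t, n (γ t)⟫ • n (γ t))) :
    ∀ t, ‖(1 / p) • (deriv N t - ⟪deriv N t, n (γ t)⟫ • n (γ t)) + k₁ • T t‖
        = a * b * |α * β| / (p ^ 2 * q) :=
  ellipsoid_curve_constant_torsion_general a b η₀ α β ha hb ν n hν hn γ hγ p q hp hq hne k₁ hk₁ T hT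
    N hN
end

section
/- Suppose (η₁, θ₁, φ₁) and (η₂, θ₂, φ₂) are two C² solutions of the geodesic system on an interval [0, L], with η₁(t), η₂(t) ∈ (0, π/2) for all t ∈ [0, L], satisfying η₁(0) = η₂(0), η₁'(0) = η₂'(0), θ₁'(0) = θ₂'(0), and φ₁'(0) = φ₂'(0) (but with possibly different initial values θ₁(0) ≠ θ₂(0) and φ₁(0) ≠ φ₂(0)). Then for all t ∈ [0, L]: η₁(t) = η₂(t), η₁'(t) = η₂'(t), θ₁'(t) = θ₂'(t), and φ₁'(t) = φ₂'(t). (That is, the quadruple (η, η', θ', φ') satisfies a first-order system that decouples from θ and φ, so its evolution is independent of the initial values of θ and φ; this is the key step showing the sectional curvatures are constant along the tubular neighbourhood of the curve (η₀, αt, βt) in the degenerate 3-ellipsoid.) -/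
/-!
Along a geodesic, the quadruple `(η, η', θ', φ')` solves a first-order autonomous system whose
right-hand side involves neither `θ` nor `φ`. That vector field is `C¹`, hence locally
Lipschitz, on the region `0 < η < π / 2`. Over a compact time interval two solutions stay in a
compact part of that region, where the field is Lipschitz, so Grönwall-type uniqueness applies.
-/

open Real Set

theorem ODE_solution_unique_of_locallyLipschitzOn_of_mem_Icc
    {E : Type*} [NormedAddCommGroup E] [NormedSpace ℝ E] {v : E → E} {U : Set E}
    {f g : ℝ → E} {a b : ℝ} (hv : LocallyLipschitzOn U v)
    (hf : ∀ t ∈ Icc a b, HasDerivAt f (v (f t)) t ∧ f t ∈ U)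
    (hg : ∀ t ∈ Icc a b, HasDerivAt g (v (g t)) t ∧ g t ∈ U)
    (ha : f a = g a) :
    EqOn f g (Icc a b) := by
  have hfc : ContinuousOn f (Icc a b) := fun t ht ↦ (hf t ht).1.continuousAt.continuousWithinAt
  have hgc : ContinuousOn g (Icc a b) := fun t ht ↦ (hg t ht).1.continuousAt.continuousWithinAt
  have hsub : f '' Icc a b ∪ g '' Icc a b ⊆ U := by
    rintro _ (⟨t, ht, rfl⟩ | ⟨t, ht, rfl⟩)
    exacts [(hf t ht).2, (hg t ht).2]
  obtain ⟨K, hK⟩ := (hv.mono hsub).exists_lipschitzOnWith_of_compact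
    ((isCompact_Icc.image_of_continuousOn hfc).union (isCompact_Icc.image_of_continuousOn hgc))
  exact ODE_solution_unique_of_mem_Icc_right (v := fun _ ↦ v) (fun _ _ ↦ hK)
    hfc (fun t ht ↦ (hf t (Ico_subset_Icc_self ht)).1.hasDerivWithinAt)
    (fun t ht ↦ .inl (mem_image_of_mem f (Ico_subset_Icc_self ht)))
    hgc (fun t ht ↦ (hg t (Ico_subset_Icc_self ht)).1.hasDerivWithinAt)
    (fun t ht ↦ .inr (mem_image_of_mem g (Ico_subset_Icc_self ht))) ha

noncomputable def ellipsoidE (a b η : ℝ) : ℝ := a ^ 2 * cos η ^ 2 + b ^ 2 * sin η ^ 2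

theorem ellipsoidE_pos {a b : ℝ} (ha : a ≠ 0) (hb : b ≠ 0) (η : ℝ) : 0 < ellipsoidE a b η := by
  have hm : 0 < min (a ^ 2) (b ^ 2) := lt_min (by positivity) (by positivity)
  unfold ellipsoidE
  nlinarith [sin_sq_add_cos_sq η, min_le_left (a ^ 2) (b ^ 2), min_le_right (a ^ 2) (b ^ 2),
    sq_nonneg (sin η), sq_nonneg (cos η)]

/-- The state `x` is `(η, η', θ', φ')`. -/
noncomputable def ellipsoidGeodesicField (a b : ℝ) (x : ℝ × ℝ × ℝ × ℝ) : ℝ × ℝ × ℝ × ℝ :=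
  (x.2.1,
    -((b ^ 2 - a ^ 2) * sin x.1 * cos x.1 / ellipsoidE a b x.1 * x.2.1 ^ 2
      - a ^ 2 * sin x.1 * cos x.1 / ellipsoidE a b x.1 * x.2.2.1 ^ 2
      + b ^ 2 * sin x.1 * cos x.1 / ellipsoidE a b x.1 * x.2.2.2 ^ 2),
    -(2 * (cos x.1 / sin x.1) * x.2.1 * x.2.2.1),
    2 * (sin x.1 / cos x.1) * x.2.1 * x.2.2.2)

theorem contDiffAt_ellipsoidGeodesicField {a b : ℝ} (ha : a ≠ 0) (hb : b ≠ 0)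
    {x : ℝ × ℝ × ℝ × ℝ} (hx : x.1 ∈ Ioo 0 (π / 2)) :
    ContDiffAt ℝ 1 (ellipsoidGeodesicField a b) x := by
  have hsin : sin x.1 ≠ 0 := (sin_pos_of_pos_of_lt_pi hx.1 (by linarith [hx.2, pi_pos])).ne'
  have hcos : cos x.1 ≠ 0 := (cos_pos_of_mem_Ioo ⟨by linarith [hx.1, pi_pos], hx.2⟩).ne'
  have hE : ellipsoidE a b x.1 ≠ 0 := (ellipsoidE_pos ha hb x.1).ne'
  unfold ellipsoidGeodesicField ellipsoidE at *
  fun_prop (disch := assumption)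

theorem locallyLipschitzOn_ellipsoidGeodesicField {a b : ℝ} (ha : a ≠ 0) (hb : b ≠ 0) :
    LocallyLipschitzOn (Ioo 0 (π / 2) ×ˢ univ) (ellipsoidGeodesicField a b) :=
  ContDiffOn.locallyLipschitzOn ((convex_Ioo _ _).prod convex_univ)
    fun _ hx ↦ (contDiffAt_ellipsoidGeodesicField ha hb hx.1).contDiffWithinAt

theorem hasDerivAt_ellipsoidGeodesicField {a b t : ℝ} {η dη dθ dφ : ℝ → ℝ}
    (hη : HasDerivAt η (dη t) t)
    (hdη : HasDerivAt dη
      (-((b ^ 2 - a ^ 2) * sin (η t) * cos (η t) / ellipsoidE a b (η t) * dη t ^ 2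
        - a ^ 2 * sin (η t) * cos (η t) / ellipsoidE a b (η t) * dθ t ^ 2
        + b ^ 2 * sin (η t) * cos (η t) / ellipsoidE a b (η t) * dφ t ^ 2)) t)
    (hdθ : HasDerivAt dθ (-(2 * (cos (η t) / sin (η t)) * dη t * dθ t)) t)
    (hdφ : HasDerivAt dφ (2 * (sin (η t) / cos (η t)) * dη t * dφ t) t) :
    HasDerivAt (fun s ↦ (η s, dη s, dθ s, dφ s))
      (ellipsoidGeodesicField a b (η t, dη t, dθ t, dφ t)) t :=
  hη.prodMk (hdη.prodMk (hdθ.prodMk hdφ))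

theorem ellipsoid_geodesic_system_decouples_general
    (a b L : ℝ) (ha : 0 < a) (hb : 0 < b)
    (E : ℝ → ℝ) (hE : ∀ η, E η = a ^ 2 * Real.cos η ^ 2 + b ^ 2 * Real.sin η ^ 2)
    (η₁ η₂ dη₁ dθ₁ dφ₁ dη₂ dθ₂ dφ₂ : ℝ → ℝ)
    (hrange₁ : ∀ t ∈ Set.Icc 0 L, η₁ t ∈ Set.Ioo 0 (Real.pi / 2))
    (hrange₂ : ∀ t ∈ Set.Icc 0 L, η₂ t ∈ Set.Ioo 0 (Real.pi / 2))
    (hd₁η : ∀ t ∈ Set.Icc 0 L, HasDerivAt η₁ (dη₁ t) t)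
    (hd₂η : ∀ t ∈ Set.Icc 0 L, HasDerivAt η₂ (dη₂ t) t)
    (hode₁η : ∀ t ∈ Set.Icc 0 L, HasDerivAt dη₁
      (-((b ^ 2 - a ^ 2) * Real.sin (η₁ t) * Real.cos (η₁ t) / E (η₁ t) * (dη₁ t) ^ 2
        - a ^ 2 * Real.sin (η₁ t) * Real.cos (η₁ t) / E (η₁ t) * (dθ₁ t) ^ 2
        + b ^ 2 * Real.sin (η₁ t) * Real.cos (η₁ t) / E (η₁ t) * (dφ₁ t) ^ 2)) t)
    (hode₁θ : ∀ t ∈ Set.Icc 0 L, HasDerivAt dθ₁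
      (-(2 * (Real.cos (η₁ t) / Real.sin (η₁ t)) * dη₁ t * dθ₁ t)) t)
    (hode₁φ : ∀ t ∈ Set.Icc 0 L, HasDerivAt dφ₁
      (2 * (Real.sin (η₁ t) / Real.cos (η₁ t)) * dη₁ t * dφ₁ t) t)
    (hode₂η : ∀ t ∈ Set.Icc 0 L, HasDerivAt dη₂
      (-((b ^ 2 - a ^ 2) * Real.sin (η₂ t) * Real.cos (η₂ t) / E (η₂ t) * (dη₂ t) ^ 2
        - a ^ 2 * Real.sin (η₂ t) * Real.cos (η₂ t) / E (η₂ t) * (dθ₂ t) ^ 2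
        + b ^ 2 * Real.sin (η₂ t) * Real.cos (η₂ t) / E (η₂ t) * (dφ₂ t) ^ 2)) t)
    (hode₂θ : ∀ t ∈ Set.Icc 0 L, HasDerivAt dθ₂
      (-(2 * (Real.cos (η₂ t) / Real.sin (η₂ t)) * dη₂ t * dθ₂ t)) t)
    (hode₂φ : ∀ t ∈ Set.Icc 0 L, HasDerivAt dφ₂
      (2 * (Real.sin (η₂ t) / Real.cos (η₂ t)) * dη₂ t * dφ₂ t) t)
    (h0η : η₁ 0 = η₂ 0) (h0dη : dη₁ 0 = dη₂ 0) (h0dθ : dθ₁ 0 = dθ₂ 0) (h0dφ : dφ₁ 0 = dφ₂ 0) :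
    ∀ t ∈ Set.Icc 0 L,
      η₁ t = η₂ t ∧ dη₁ t = dη₂ t ∧ dθ₁ t = dθ₂ t ∧ dφ₁ t = dφ₂ t := by
  obtain rfl : E = ellipsoidE a b := funext hE
  have hstates := ODE_solution_unique_of_locallyLipschitzOn_of_mem_Icc
    (locallyLipschitzOn_ellipsoidGeodesicField ha.ne' hb.ne')
    (fun t ht ↦ ⟨hasDerivAt_ellipsoidGeodesicField (hd₁η t ht) (hode₁η t ht) (hode₁θ t ht)
      (hode₁φ t ht), hrange₁ t ht, trivial⟩)
    (fun t ht ↦ ⟨hasDerivAt_ellipsoidGeodesicField (hd₂η t ht) (hode₂η t ht) (hode₂θ t ht)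
      (hode₂φ t ht), hrange₂ t ht, trivial⟩)
    (by simp only [h0η, h0dη, h0dθ, h0dφ])
  intro t ht
  simpa only [Prod.ext_iff] using hstates ht

/-- Uniqueness/decoupling for the geodesic system of the metric
`diag(a² cos²η + b² sin²η, a² sin²η, b² cos²η)` on the degenerate 3-ellipsoid: two C²
geodesics `(η₁,θ₁,φ₁)` and `(η₂,θ₂,φ₂)` on `[0,L]` with `ηᵢ(t) ∈ (0,π/2)`, with the same
initial values of `η, η', θ', φ'` (but possibly different initial values of `θ` and `φ`),
have the same `η, η', θ', φ'` for all `t ∈ [0,L]`: the quadruple `(η, η', θ', φ')`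
satisfies a first-order system that decouples from `θ` and `φ`. -/
theorem ellipsoid_geodesic_system_decouples
    (a b L : ℝ) (ha : 0 < a) (hb : 0 < b) (hL : 0 ≤ L)
    (E : ℝ → ℝ) (hE : ∀ η, E η = a ^ 2 * Real.cos η ^ 2 + b ^ 2 * Real.sin η ^ 2)
    (η₁ θ₁ φ₁ η₂ θ₂ φ₂ dη₁ dθ₁ dφ₁ dη₂ dθ₂ dφ₂ : ℝ → ℝ)
    (hrange₁ : ∀ t ∈ Set.Icc 0 L, η₁ t ∈ Set.Ioo 0 (Real.pi / 2))
    (hrange₂ : ∀ t ∈ Set.Icc 0 L, η₂ t ∈ Set.Ioo 0 (Real.pi / 2))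
    (hd₁η : ∀ t ∈ Set.Icc 0 L, HasDerivAt η₁ (dη₁ t) t)
    (hd₁θ : ∀ t ∈ Set.Icc 0 L, HasDerivAt θ₁ (dθ₁ t) t)
    (hd₁φ : ∀ t ∈ Set.Icc 0 L, HasDerivAt φ₁ (dφ₁ t) t)
    (hd₂η : ∀ t ∈ Set.Icc 0 L, HasDerivAt η₂ (dη₂ t) t)
    (hd₂θ : ∀ t ∈ Set.Icc 0 L, HasDerivAt θ₂ (dθ₂ t) t)
    (hd₂φ : ∀ t ∈ Set.Icc 0 L, HasDerivAt φ₂ (dφ₂ t) t)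
    (hode₁η : ∀ t ∈ Set.Icc 0 L, HasDerivAt dη₁
      (-((b ^ 2 - a ^ 2) * Real.sin (η₁ t) * Real.cos (η₁ t) / E (η₁ t) * (dη₁ t) ^ 2
        - a ^ 2 * Real.sin (η₁ t) * Real.cos (η₁ t) / E (η₁ t) * (dθ₁ t) ^ 2
        + b ^ 2 * Real.sin (η₁ t) * Real.cos (η₁ t) / E (η₁ t) * (dφ₁ t) ^ 2)) t)
    (hode₁θ : ∀ t ∈ Set.Icc 0 L, HasDerivAt dθ₁
      (-(2 * (Real.cos (η₁ t) / Real.sin (η₁ t)) * dη₁ t * dθ₁ t)) t)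
    (hode₁φ : ∀ t ∈ Set.Icc 0 L, HasDerivAt dφ₁
      (2 * (Real.sin (η₁ t) / Real.cos (η₁ t)) * dη₁ t * dφ₁ t) t)
    (hode₂η : ∀ t ∈ Set.Icc 0 L, HasDerivAt dη₂
      (-((b ^ 2 - a ^ 2) * Real.sin (η₂ t) * Real.cos (η₂ t) / E (η₂ t) * (dη₂ t) ^ 2
        - a ^ 2 * Real.sin (η₂ t) * Real.cos (η₂ t) / E (η₂ t) * (dθ₂ t) ^ 2
        + b ^ 2 * Real.sin (η₂ t) * Real.cos (η₂ t) / E (η₂ t) * (dφ₂ t) ^ 2)) t)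
    (hode₂θ : ∀ t ∈ Set.Icc 0 L, HasDerivAt dθ₂
      (-(2 * (Real.cos (η₂ t) / Real.sin (η₂ t)) * dη₂ t * dθ₂ t)) t)
    (hode₂φ : ∀ t ∈ Set.Icc 0 L, HasDerivAt dφ₂
      (2 * (Real.sin (η₂ t) / Real.cos (η₂ t)) * dη₂ t * dφ₂ t) t)
    (h0η : η₁ 0 = η₂ 0) (h0dη : dη₁ 0 = dη₂ 0) (h0dθ : dθ₁ 0 = dθ₂ 0) (h0dφ : dφ₁ 0 = dφ₂ 0) :
    ∀ t ∈ Set.Icc 0 L,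
      η₁ t = η₂ t ∧ dη₁ t = dη₂ t ∧ dθ₁ t = dθ₂ t ∧ dφ₁ t = dφ₂ t :=
  ellipsoid_geodesic_system_decouples_general a b L ha hb E hE η₁ η₂ dη₁ dθ₁ dφ₁ dη₂ dθ₂ dφ₂ hrange₁
    hrange₂ hd₁η hd₂η hode₁η hode₁θ hode₁φ hode₂η hode₂θ hode₂φ h0η h0dη h0dθ h0dφ
end
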